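/- arXiv:math/0701008 — 5 statements merged into one kernel-verified Lean document; each statement's English description precedes it below -/
import Mathlib

section
/- In a bar category, the coboundary natural isomorphism Ξ satisfies the cocycle identity: Φ_{X,Y,Z} ∘ (Ξ_{X,Y} ⊗ id) ∘ Ξ_{X⊗Y,Z} = (id ⊗ Ξ_{Y,Z}) ∘ Ξ_{X,Y⊗Z} ∘ Φ_{X,Y,Z}, and moreover Ξ_{X,1} = id and Ξ_{1,X} = id. -/
open CategoryTheory MonoidalCategory

universe v u

/-- A bar category: a monoidal category `C` with a functor `bar : C ⥤ C`, a natural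
equivalence `bb` between the identity and `bar ∘ bar`, an invertible morphism
`⋆ : 𝟙_ C ≅ bar (𝟙_ C)`, and a natural equivalence `Υ : bar (X ⊗ Y) ≅ bar Y ⊗ bar X`,
satisfying axioms a) (compatibility with the unit isomorphisms, where `l : X ≅ X ⊗ 𝟙_` and
`r : X ≅ 𝟙_ ⊗ X` in the paper's conventions), b) (compatibility with the associator),
c) `⋆̄ ∘ ⋆ = bb_{𝟙_}` and d) `(bb_X)‾ = bb_{X̄}`. -/
structure BarCategoryStruct (C : Type u) [Category.{v} C] [MonoidalCategory C] where
  bar : C ⥤ C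
  bb : 𝟭 C ≅ bar ⋙ bar
  star : 𝟙_ C ≅ bar.obj (𝟙_ C)
  Upsilon : ∀ X Y : C, bar.obj (X ⊗ Y) ≅ bar.obj Y ⊗ bar.obj X
  upsilon_natural : ∀ {X Y X' Y' : C} (θ : X ⟶ X') (φ : Y ⟶ Y'),
    bar.map (θ ⊗ₘ φ) ≫ (Upsilon X' Y').hom =
      (Upsilon X Y).hom ≫ (bar.map φ ⊗ₘ bar.map θ)
  axiom_a1 : ∀ X : C,
    bar.map (ρ_ X).inv ≫ (Upsilon X (𝟙_ C)).hom ≫ (star.inv ⊗ₘ 𝟙 (bar.obj X)) =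
      (λ_ (bar.obj X)).inv
  axiom_a2 : ∀ X : C,
    bar.map (λ_ X).inv ≫ (Upsilon (𝟙_ C) X).hom ≫ (𝟙 (bar.obj X) ⊗ₘ star.inv) =
      (ρ_ (bar.obj X)).inv
  axiom_b : ∀ X Y Z : C,
    bar.map (α_ X Y Z).hom ≫ (Upsilon X (Y ⊗ Z)).hom ≫
        ((Upsilon Y Z).hom ⊗ₘ 𝟙 (bar.obj X)) ≫
        (α_ (bar.obj Z) (bar.obj Y) (bar.obj X)).hom =
      (Upsilon (X ⊗ Y) Z).hom ≫ (𝟙 (bar.obj Z) ⊗ₘ (Upsilon X Y).hom)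
  axiom_c : star.hom ≫ bar.map star.hom = bb.hom.app (𝟙_ C)
  axiom_d : ∀ X : C, bar.map (bb.hom.app X) = bb.hom.app (bar.obj X)

variable {C : Type u} [Category.{v} C] [MonoidalCategory C]

/-- The coboundary natural isomorphism `Ξ_{X,Y} : X ⊗ Y ⟶ X ⊗ Y` of a bar category, defined
by `(bb_X ⊗ bb_Y) ∘ Ξ_{X,Y} = Υ_{Ȳ,X̄} ∘ (Υ_{X,Y})‾ ∘ bb_{X⊗Y}`. -/
def BarCategoryStruct.Xi (B : BarCategoryStruct C) (X Y : C) : X ⊗ Y ⟶ X ⊗ Y :=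
  B.bb.hom.app (X ⊗ Y) ≫ B.bar.map (B.Upsilon X Y).hom ≫
    (B.Upsilon (B.bar.obj Y) (B.bar.obj X)).hom ≫ (B.bb.inv.app X ⊗ₘ B.bb.inv.app Y)

/-!
Put `δ_{X,Y} = Υ_{Ȳ,X̄} ∘ (Υ_{X,Y})‾ : (X ⊗ Y)‾‾ ⟶ X̄̄ ⊗ Ȳ̄`, so that `Ξ` is the conjugate of `δ` by the
natural isomorphism `bb : id ≅ bar ∘ bar`. Axiom (b), applied to `X, Y, Z` and barred, and once more
to `Z̄, Ȳ, X̄`, makes `δ` coassociative; axioms (a) and (c) say that `bb_𝟙⁻¹` is a counit for it. Thus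
`(bar ∘ bar, δ)` is a monoidal functor, and conjugating by the natural `bb` transports these identities
to the cocycle identity and the normalisation of `Ξ`.
-/

namespace BarCategoryStruct

variable (B : BarCategoryStruct C)

lemma comp_bb_hom_app {X Y : C} (f : X ⟶ Y) :
    f ≫ B.bb.hom.app Y = B.bb.hom.app X ≫ B.bar.map (B.bar.map f) :=
  B.bb.hom.naturality f

lemma bar_map_whiskerRight_comp_Upsilon {X X' : C} (f : X ⟶ X') (Y : C) :
    B.bar.map (f ▷ Y) ≫ (B.Upsilon X' Y).hom =
      (B.Upsilon X Y).hom ≫ (B.bar.obj Y ◁ B.bar.map f) := by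
  simpa using B.upsilon_natural f (𝟙 Y)

lemma bar_map_whiskerLeft_comp_Upsilon (X : C) {Y Y' : C} (f : Y ⟶ Y') :
    B.bar.map (X ◁ f) ≫ (B.Upsilon X Y').hom =
      (B.Upsilon X Y).hom ≫ (B.bar.map f ▷ B.bar.obj X) := by
  simpa using B.upsilon_natural (𝟙 X) f

lemma bar_map_rightUnitor_inv_comp_Upsilon (X : C) :
    B.bar.map (ρ_ X).inv ≫ (B.Upsilon X (𝟙_ C)).hom =
      (λ_ (B.bar.obj X)).inv ≫ (B.star.hom ▷ B.bar.obj X) := by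
  rw [← B.axiom_a1 X]
  simp [← tensorHom_id]

lemma bar_map_leftUnitor_inv_comp_Upsilon (X : C) :
    B.bar.map (λ_ X).inv ≫ (B.Upsilon (𝟙_ C) X).hom =
      (ρ_ (B.bar.obj X)).inv ≫ (B.bar.obj X ◁ B.star.hom) := by
  rw [← B.axiom_a2 X]
  simp [← id_tensorHom]

def barBarδ (X Y : C) :
    B.bar.obj (B.bar.obj (X ⊗ Y)) ⟶ B.bar.obj (B.bar.obj X) ⊗ B.bar.obj (B.bar.obj Y) :=
  B.bar.map (B.Upsilon X Y).hom ≫ (B.Upsilon (B.bar.obj Y) (B.bar.obj X)).hom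

lemma Xi_eq (X Y : C) :
    B.Xi X Y = B.bb.hom.app (X ⊗ Y) ≫ B.barBarδ X Y ≫ (B.bb.inv.app X ⊗ₘ B.bb.inv.app Y) := by
  simp only [Xi, barBarδ, Category.assoc]

lemma barBarδ_assoc (X Y Z : C) :
    B.bar.map (B.bar.map (α_ X Y Z).hom) ≫ B.barBarδ X (Y ⊗ Z) ≫
        (B.bar.obj (B.bar.obj X) ◁ B.barBarδ Y Z) =
      B.barBarδ (X ⊗ Y) Z ≫ (B.barBarδ X Y ▷ B.bar.obj (B.bar.obj Z)) ≫ (α_ _ _ _).hom := by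
  have hXYZ := B.bar.congr_map (B.axiom_b X Y Z)
  have hZYX := B.axiom_b (B.bar.obj Z) (B.bar.obj Y) (B.bar.obj X)
  simp only [Functor.map_comp, tensorHom_id, id_tensorHom] at hXYZ hZYX
  simp only [barBarδ, whiskerLeft_comp, comp_whiskerRight, Category.assoc]
  rw [← reassoc_of% (B.bar_map_whiskerRight_comp_Upsilon (B.Upsilon Y Z).hom), ← hZYX,
    reassoc_of% hXYZ, reassoc_of% (B.bar_map_whiskerLeft_comp_Upsilon (B.bar.obj Z))]

lemma bar_map_bar_map_rightUnitor_inv_comp_barBarδ (X : C) :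
    B.bar.map (B.bar.map (ρ_ X).inv) ≫ B.barBarδ X (𝟙_ C) =
      (ρ_ _).inv ≫ (B.bar.obj (B.bar.obj X) ◁ B.bb.hom.app (𝟙_ C)) := by
  rw [barBarδ, ← Functor.map_comp_assoc, bar_map_rightUnitor_inv_comp_Upsilon,
    Functor.map_comp_assoc, bar_map_whiskerRight_comp_Upsilon,
    reassoc_of% (B.bar_map_leftUnitor_inv_comp_Upsilon (B.bar.obj X)), ← whiskerLeft_comp, axiom_c]

lemma bar_map_bar_map_leftUnitor_inv_comp_barBarδ (X : C) :
    B.bar.map (B.bar.map (λ_ X).inv) ≫ B.barBarδ (𝟙_ C) X =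
      (λ_ _).inv ≫ (B.bb.hom.app (𝟙_ C) ▷ B.bar.obj (B.bar.obj X)) := by
  rw [barBarδ, ← Functor.map_comp_assoc, bar_map_leftUnitor_inv_comp_Upsilon,
    Functor.map_comp_assoc, bar_map_whiskerLeft_comp_Upsilon,
    reassoc_of% (B.bar_map_rightUnitor_inv_comp_Upsilon (B.bar.obj X)), ← comp_whiskerRight, axiom_c]

lemma Xi_unit_right (X : C) : B.Xi X (𝟙_ C) = 𝟙 (X ⊗ 𝟙_ C) := by
  rw [← cancel_epi (ρ_ X).inv, Xi_eq, reassoc_of% (B.comp_bb_hom_app (ρ_ X).inv),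
    reassoc_of% (B.bar_map_bar_map_rightUnitor_inv_comp_barBarδ X),
    ← id_tensorHom, tensorHom_comp_tensorHom]
  simp

lemma Xi_unit_left (X : C) : B.Xi (𝟙_ C) X = 𝟙 (𝟙_ C ⊗ X) := by
  rw [← cancel_epi (λ_ X).inv, Xi_eq, reassoc_of% (B.comp_bb_hom_app (λ_ X).inv),
    reassoc_of% (B.bar_map_bar_map_leftUnitor_inv_comp_barBarδ X),
    ← tensorHom_id, tensorHom_comp_tensorHom]
  simp

lemma Xi_assoc (X Y Z : C) :
    B.Xi (X ⊗ Y) Z ≫ (B.Xi X Y ⊗ₘ 𝟙 Z) ≫ (α_ X Y Z).hom =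
      (α_ X Y Z).hom ≫ B.Xi X (Y ⊗ Z) ≫ (𝟙 X ⊗ₘ B.Xi Y Z) := by
  let bbInv := B.bb.inv.app X ⊗ₘ (B.bb.inv.app Y ⊗ₘ B.bb.inv.app Z)
  calc _ = B.bb.hom.app _ ≫ B.barBarδ (X ⊗ Y) Z ≫ (B.barBarδ X Y ▷ _) ≫ (α_ _ _ _).hom ≫ bbInv := by
        simp only [bbInv, Xi_eq, ← tensorHom_id, tensorHom_comp_tensorHom_assoc, Category.assoc]
        rw [← associator_naturality, tensorHom_comp_tensorHom_assoc]
        simp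
    _ = B.bb.hom.app _ ≫ B.bar.map (B.bar.map (α_ X Y Z).hom) ≫ B.barBarδ X (Y ⊗ Z) ≫
        (_ ◁ B.barBarδ Y Z) ≫ bbInv := by
        rw [reassoc_of% (B.barBarδ_assoc X Y Z)]
    _ = (α_ X Y Z).hom ≫ B.bb.hom.app _ ≫ B.barBarδ X (Y ⊗ Z) ≫ (_ ◁ B.barBarδ Y Z) ≫ bbInv := by
        rw [reassoc_of% (B.comp_bb_hom_app (α_ X Y Z).hom)]
    _ = _ := by
        simp [bbInv, Xi_eq, ← id_tensorHom, tensorHom_comp_tensorHom]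

end BarCategoryStruct

/-- In a bar category, the coboundary `Ξ` is a cocycle:
`Φ_{X,Y,Z} ∘ (Ξ_{X,Y} ⊗ id) ∘ Ξ_{X⊗Y,Z} = (id ⊗ Ξ_{Y,Z}) ∘ Ξ_{X,Y⊗Z} ∘ Φ_{X,Y,Z}`, and
moreover `Ξ_{X,𝟙} = id` and `Ξ_{𝟙,X} = id`. -/
theorem BarCategoryStruct.Xi_cocycle (B : BarCategoryStruct C) (X Y Z : C) :
    (B.Xi (X ⊗ Y) Z ≫ (B.Xi X Y ⊗ₘ 𝟙 Z) ≫ (α_ X Y Z).hom =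
      (α_ X Y Z).hom ≫ B.Xi X (Y ⊗ Z) ≫ (𝟙 X ⊗ₘ B.Xi Y Z)) ∧
    B.Xi X (𝟙_ C) = 𝟙 (X ⊗ 𝟙_ C) ∧ B.Xi (𝟙_ C) X = 𝟙 (𝟙_ C ⊗ X) :=
  ⟨B.Xi_assoc X Y Z, B.Xi_unit_right X, B.Xi_unit_left X⟩
end

section
/- Let (H, ℛ) be a quasitriangular Hopf algebra over ℂ which is a flip-*-Hopf algebra with ℛ^{*⊗*} = ℛ₂₁⁻¹. Then the Drinfeld elements satisfy u* = u⁻¹ and v* = v⁻¹, where u = (Sℛ⁽²⁾)ℛ⁽¹⁾ and v = ℛ⁽¹⁾(Sℛ⁽²⁾). -/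
open TensorProduct
set_option synthInstance.maxHeartbeats 1000000
set_option maxHeartbeats 1000000
namespace DrinAux
variable {H : Type*} [Ring H] [HopfAlgebra ℂ H]

noncomputable abbrev aS : H →ₗ[ℂ] H := HopfAlgebra.antipode (R := ℂ)

/-- bilinear map `x ⊗ y ↦ f x * g y` -/
noncomputable def bm (f g : H →ₗ[ℂ] H) : H ⊗[ℂ] H →ₗ[ℂ] H :=
  TensorProduct.lift <| LinearMap.mk₂ ℂ (fun x y => f x * g y)
    (fun x x' y => by simp [add_mul]) (fun r x y => by simp [smul_mul_assoc])
    (fun x y y' => by simp [mul_add]) (fun r x y => by simp [mul_smul_comm])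

/-- bilinear map `x ⊗ y ↦ g y * f x` -/
noncomputable def bm' (f g : H →ₗ[ℂ] H) : H ⊗[ℂ] H →ₗ[ℂ] H :=
  TensorProduct.lift <| LinearMap.mk₂ ℂ (fun x y => g y * f x)
    (fun x x' y => by simp [mul_add]) (fun r x y => by simp [mul_smul_comm])
    (fun x y y' => by simp [add_mul]) (fun r x y => by simp [smul_mul_assoc])

@[simp] lemma bm_tmul (f g : H →ₗ[ℂ] H) (x y : H) : bm f g (x ⊗ₜ[ℂ] y) = f x * g y := rfl
@[simp] lemma bm'_tmul (f g : H →ₗ[ℂ] H) (x y : H) : bm' f g (x ⊗ₜ[ℂ] y) = g y * f x := rfl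

lemma exists_nat_repr (x : H ⊗[ℂ] H) :
    ∃ (t : Finset ℕ) (a b : ℕ → H), x = ∑ i ∈ t, a i ⊗ₜ[ℂ] b i := by
  induction x with
  | zero => exact ⟨∅, 0, 0, by simp⟩
  | tmul a b => exact ⟨{0}, fun _ => a, fun _ => b, by simp⟩
  | add x y hx hy =>
    obtain ⟨t, a, b, rfl⟩ := hx
    obtain ⟨t', a', b', rfl⟩ := hy
    refine ⟨t.image (fun n => 2 * n) ∪ t'.image (fun n => 2 * n + 1),
      fun n => if n % 2 = 0 then a (n / 2) else a' (n / 2),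
      fun n => if n % 2 = 0 then b (n / 2) else b' (n / 2), ?_⟩
    rw [Finset.sum_union]
    · rw [Finset.sum_image (fun a _ b _ h => by omega), Finset.sum_image (fun a _ b _ h => by omega)]
      congr 1 <;> apply Finset.sum_congr rfl <;> intro i _
      · have h1 : 2 * i % 2 = 0 := by omega
        have h2 : 2 * i / 2 = i := by omega
        simp [h1, h2]
      · have h1 : (2 * i + 1) % 2 = 1 := by omega
        have h2 : (2 * i + 1) / 2 = i := by omega
        simp [h1, h2]
    · rw [Finset.disjoint_left]
      rintro n hn hn'
      simp only [Finset.mem_image] at hn hn'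
      obtain ⟨a1, -, rfl⟩ := hn
      obtain ⟨a2, -, h⟩ := hn'
      omega


section reprlemmas
variable {ι : Type*} (t : Finset ι) (a b : ι → H)

lemma sum_S_mul {h : H} (hc : Coalgebra.comul (R := ℂ) h = ∑ i ∈ t, a i ⊗ₜ[ℂ] b i) :
    ∑ i ∈ t, aS (a i) * b i = algebraMap ℂ H (Coalgebra.counit (R := ℂ) h) := by
  have := HopfAlgebra.mul_antipode_rTensor_comul_apply (R := ℂ) h
  rw [hc] at this
  simpa [map_sum] using this

lemma sum_mul_S {h : H} (hc : Coalgebra.comul (R := ℂ) h = ∑ i ∈ t, a i ⊗ₜ[ℂ] b i) :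
    ∑ i ∈ t, a i * aS (b i) = algebraMap ℂ H (Coalgebra.counit (R := ℂ) h) := by
  have := HopfAlgebra.mul_antipode_lTensor_comul_apply (R := ℂ) h
  rw [hc] at this
  simpa [map_sum] using this

lemma sum_counit_smul {h : H} (hc : Coalgebra.comul (R := ℂ) h = ∑ i ∈ t, a i ⊗ₜ[ℂ] b i) :
    ∑ i ∈ t, Coalgebra.counit (R := ℂ) (a i) • b i = h := by
  have := Coalgebra.rTensor_counit_comul (R := ℂ) h
  rw [hc] at this
  apply_fun (TensorProduct.lid ℂ H) at this
  simpa [map_sum] using this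

lemma sum_smul_counit {h : H} (hc : Coalgebra.comul (R := ℂ) h = ∑ i ∈ t, a i ⊗ₜ[ℂ] b i) :
    ∑ i ∈ t, Coalgebra.counit (R := ℂ) (b i) • a i = h := by
  have := Coalgebra.lTensor_counit_comul (R := ℂ) h
  rw [hc] at this
  apply_fun (TensorProduct.rid ℂ H) at this
  simpa [map_sum] using this

end reprlemmas

lemma coassoc_repr {h : H} {t : Finset ℕ} {a b : ℕ → H}
    (hc : Coalgebra.comul (R := ℂ) h = ∑ j ∈ t, a j ⊗ₜ[ℂ] b j)
    {p q : ℕ → Finset ℕ} {c d e f : ℕ → ℕ → H}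
    (hca : ∀ j ∈ t, Coalgebra.comul (R := ℂ) (a j) = ∑ k ∈ p j, c j k ⊗ₜ[ℂ] d j k)
    (hcb : ∀ j ∈ t, Coalgebra.comul (R := ℂ) (b j) = ∑ k ∈ q j, e j k ⊗ₜ[ℂ] f j k) :
    ∑ j ∈ t, ∑ k ∈ p j, c j k ⊗ₜ[ℂ] (d j k ⊗ₜ[ℂ] b j)
      = ∑ j ∈ t, ∑ k ∈ q j, a j ⊗ₜ[ℂ] (e j k ⊗ₜ[ℂ] f j k) := by
  have h1 := Coalgebra.coassoc_apply (R := ℂ) h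
  rw [hc] at h1
  calc ∑ j ∈ t, ∑ k ∈ p j, c j k ⊗ₜ[ℂ] (d j k ⊗ₜ[ℂ] b j)
      = (TensorProduct.assoc ℂ H H H)
          ((LinearMap.rTensor H (Coalgebra.comul (R := ℂ))) (∑ j ∈ t, a j ⊗ₜ[ℂ] b j)) := by
        rw [map_sum, map_sum]
        refine Finset.sum_congr rfl fun j hj => ?_
        rw [LinearMap.rTensor_tmul, hca j hj, TensorProduct.sum_tmul, map_sum]
        exact Finset.sum_congr rfl fun k _ => rfl
    _ = (LinearMap.lTensor H (Coalgebra.comul (R := ℂ))) (∑ j ∈ t, a j ⊗ₜ[ℂ] b j) := h1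
    _ = ∑ j ∈ t, ∑ k ∈ q j, a j ⊗ₜ[ℂ] (e j k ⊗ₜ[ℂ] f j k) := by
        rw [map_sum]
        refine Finset.sum_congr rfl fun j hj => ?_
        rw [LinearMap.lTensor_tmul, hcb j hj, TensorProduct.tmul_sum]

lemma S_one : aS (1 : H) = 1 := by
  have := sum_S_mul (H := H) {0} (fun _ => (1:H)) (fun _ => (1:H))
    (by rw [Bialgebra.comul_one, Algebra.TensorProduct.one_def, Finset.sum_singleton])
  simpa [Bialgebra.counit_one] using this


section helpers
variable {M : Type*} [AddCommMonoid M]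

lemma sum4_comm (s : Finset ℕ) (p : ℕ → Finset ℕ) (s' : Finset ℕ) (p' : ℕ → Finset ℕ)
    (F : ℕ → ℕ → ℕ → ℕ → M) :
    ∑ i ∈ s, ∑ k ∈ p i, ∑ j ∈ s', ∑ l ∈ p' j, F i k j l
      = ∑ j ∈ s', ∑ l ∈ p' j, ∑ i ∈ s, ∑ k ∈ p i, F i k j l := by
  have h1 : ∑ i ∈ s, ∑ k ∈ p i, ∑ j ∈ s', ∑ l ∈ p' j, F i k j l
      = ∑ x ∈ s.sigma p, ∑ y ∈ s'.sigma p', F x.1 x.2 y.1 y.2 := by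
    rw [Finset.sum_sigma s p (fun x => ∑ y ∈ s'.sigma p', F x.1 x.2 y.1 y.2)]
    exact Finset.sum_congr rfl fun i _ => Finset.sum_congr rfl fun k _ =>
      (Finset.sum_sigma s' p' (fun y => F i k y.1 y.2)).symm
  have h2 : ∑ j ∈ s', ∑ l ∈ p' j, ∑ i ∈ s, ∑ k ∈ p i, F i k j l
      = ∑ y ∈ s'.sigma p', ∑ x ∈ s.sigma p, F x.1 x.2 y.1 y.2 := by
    rw [Finset.sum_sigma s' p' (fun y => ∑ x ∈ s.sigma p, F x.1 x.2 y.1 y.2)]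
    exact Finset.sum_congr rfl fun j _ => Finset.sum_congr rfl fun l _ =>
      (Finset.sum_sigma s p (fun x => F x.1 x.2 j l)).symm
  rw [h1, h2, Finset.sum_comm]

end helpers

section collapses
variable {ι : Type*} {t : Finset ι} {f g : ι → H} {c : ℂ}

/-- collapse `∑ f k * (aS (g k) * B)` when `∑ f k * aS (g k) = algebraMap c`. -/
lemma collapse_mul_S (hs : ∑ k ∈ t, f k * aS (g k) = algebraMap ℂ H c) (B : H) :
    ∑ k ∈ t, f k * (aS (g k) * B) = c • B := by
  calc ∑ k ∈ t, f k * (aS (g k) * B) = (∑ k ∈ t, f k * aS (g k)) * B := by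
        rw [Finset.sum_mul]; exact Finset.sum_congr rfl fun k _ => (mul_assoc _ _ _).symm
    _ = c • B := by rw [hs, Algebra.smul_def]

lemma collapse_S_mul (hs : ∑ k ∈ t, aS (f k) * g k = algebraMap ℂ H c) (B : H) :
    ∑ k ∈ t, aS (f k) * (g k * B) = c • B := by
  calc ∑ k ∈ t, aS (f k) * (g k * B) = (∑ k ∈ t, aS (f k) * g k) * B := by
        rw [Finset.sum_mul]; exact Finset.sum_congr rfl fun k _ => (mul_assoc _ _ _).symm
    _ = c • B := by rw [hs, Algebra.smul_def]

end collapses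

noncomputable def th1 (p q r : H) : H ⊗[ℂ] (H ⊗[ℂ] H) →ₗ[ℂ] H :=
  (bm (aS ∘ₗ LinearMap.mulRight ℂ p) LinearMap.id).comp
    (LinearMap.lTensor H (bm (LinearMap.mulRight ℂ q) (LinearMap.mulLeft ℂ (aS r) ∘ₗ aS)))

@[simp] lemma th1_tmul (p q r x₀ y₀ z₀ : H) :
    th1 p q r (x₀ ⊗ₜ[ℂ] (y₀ ⊗ₜ[ℂ] z₀)) = aS (x₀ * p) * ((y₀ * q) * (aS r * aS z₀)) := rfl

noncomputable def th2 (x₀ y₀ z₀ : H) : H ⊗[ℂ] (H ⊗[ℂ] H) →ₗ[ℂ] H :=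
  (bm (aS ∘ₗ LinearMap.mulLeft ℂ x₀) LinearMap.id).comp
    (LinearMap.lTensor H (bm (LinearMap.mulLeft ℂ y₀) (LinearMap.mulRight ℂ (aS z₀) ∘ₗ aS)))

@[simp] lemma th2_tmul (x₀ y₀ z₀ p q r : H) :
    th2 x₀ y₀ z₀ (p ⊗ₜ[ℂ] (q ⊗ₜ[ℂ] r)) = aS (x₀ * p) * ((y₀ * q) * (aS r * aS z₀)) := rfl


lemma alg_shuffle (c d : ℂ) (X : H) :
    algebraMap ℂ H c * (X * algebraMap ℂ H d) = algebraMap ℂ H (c * d) * X := by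
  rw [map_mul, ← Algebra.commutes d X, ← mul_assoc]

lemma antipode_mul (x y : H) : aS (x * y) = aS y * aS x := by
  classical
  obtain ⟨ta, a1, a2, ha⟩ := exists_nat_repr (Coalgebra.comul (R := ℂ) x)
  obtain ⟨tb, b1, b2, hb⟩ := exists_nat_repr (Coalgebra.comul (R := ℂ) y)
  choose pa ca da hpa using fun i => exists_nat_repr (Coalgebra.comul (R := ℂ) (a1 i))
  choose qa ea fa hqa using fun i => exists_nat_repr (Coalgebra.comul (R := ℂ) (a2 i))
  choose pb cb db hpb using fun j => exists_nat_repr (Coalgebra.comul (R := ℂ) (b1 j))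
  choose qb eb fb hqb using fun j => exists_nat_repr (Coalgebra.comul (R := ℂ) (b2 j))
  have Lx := coassoc_repr ha (fun j _ => hpa j) (fun j _ => hqa j)
  have Ly := coassoc_repr hb (fun j _ => hpb j) (fun j _ => hqb j)
  set Q : H := ∑ j ∈ tb, ∑ l ∈ qb j, ∑ i ∈ ta, ∑ k ∈ qa i,
      aS (a1 i * b1 j) * ((ea i k * eb j l) * (aS (fb j l) * aS (fa i k))) with hQ
  -- Evaluation 1 : Q = aS (x * y)
  have evalA : Q = aS (x * y) := by
    rw [hQ]
    have swap : ∀ j, ∑ l ∈ qb j, ∑ i ∈ ta, ∑ k ∈ qa i,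
        aS (a1 i * b1 j) * ((ea i k * eb j l) * (aS (fb j l) * aS (fa i k)))
        = ∑ i ∈ ta, ∑ k ∈ qa i, ∑ l ∈ qb j,
        aS (a1 i * b1 j) * ((ea i k * eb j l) * (aS (fb j l) * aS (fa i k))) := by
      intro j
      rw [Finset.sum_comm]
      exact Finset.sum_congr rfl fun i _ => Finset.sum_comm
    calc ∑ j ∈ tb, ∑ l ∈ qb j, ∑ i ∈ ta, ∑ k ∈ qa i,
        aS (a1 i * b1 j) * ((ea i k * eb j l) * (aS (fb j l) * aS (fa i k)))
        = ∑ j ∈ tb, ∑ i ∈ ta, ∑ k ∈ qa i,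
            (Coalgebra.counit (R := ℂ) (b2 j)) • (aS (a1 i * b1 j) * (ea i k * aS (fa i k))) := by
          refine Finset.sum_congr rfl fun j _ => ?_
          rw [swap j]
          refine Finset.sum_congr rfl fun i _ => Finset.sum_congr rfl fun k _ => ?_
          have h1 : ∀ l, aS (a1 i * b1 j) * ((ea i k * eb j l) * (aS (fb j l) * aS (fa i k)))
              = aS (a1 i * b1 j) * (ea i k * (eb j l * (aS (fb j l) * aS (fa i k)))) := by
            intro l; rw [mul_assoc]
          rw [Finset.sum_congr rfl fun l _ => h1 l, ← Finset.mul_sum, ← Finset.mul_sum,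
            collapse_mul_S (sum_mul_S _ _ _ (hqb j)) (aS (fa i k)), mul_smul_comm, mul_smul_comm]
    _ = ∑ j ∈ tb, ∑ i ∈ ta,
            ((Coalgebra.counit (R := ℂ) (b2 j)) * Coalgebra.counit (R := ℂ) (a2 i))
              • aS (a1 i * b1 j) := by
          refine Finset.sum_congr rfl fun j _ => Finset.sum_congr rfl fun i _ => ?_
          rw [← Finset.smul_sum, ← Finset.mul_sum, sum_mul_S _ _ _ (hqa i),
            Algebra.smul_def, Algebra.smul_def, alg_shuffle]
    _ = aS (x * y) := by
          have h2 : ∀ j, ∑ i ∈ ta,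
              ((Coalgebra.counit (R := ℂ) (b2 j)) * Coalgebra.counit (R := ℂ) (a2 i))
                • aS (a1 i * b1 j)
              = (Coalgebra.counit (R := ℂ) (b2 j)) • aS (x * b1 j) := by
            intro j
            have : ∀ i, ((Coalgebra.counit (R := ℂ) (b2 j)) * Coalgebra.counit (R := ℂ) (a2 i))
                • aS (a1 i * b1 j)
                = (Coalgebra.counit (R := ℂ) (b2 j)) •
                    ((aS ∘ₗ LinearMap.mulRight ℂ (b1 j)) ((Coalgebra.counit (R := ℂ) (a2 i)) • a1 i)) := by
              intro i; rw [map_smul, mul_smul]; rfl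
            rw [Finset.sum_congr rfl fun i _ => this i, ← Finset.smul_sum, ← map_sum,
              sum_smul_counit _ _ _ ha]
            rfl
          rw [Finset.sum_congr rfl fun j _ => h2 j]
          have : ∀ j, (Coalgebra.counit (R := ℂ) (b2 j)) • aS (x * b1 j)
              = (aS ∘ₗ LinearMap.mulLeft ℂ x) ((Coalgebra.counit (R := ℂ) (b2 j)) • b1 j) := by
            intro j; rw [map_smul]; rfl
          rw [Finset.sum_congr rfl fun j _ => this j, ← map_sum, sum_smul_counit _ _ _ hb]
          rfl
  -- Evaluation 2 : Q = aS y * aS x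
  have evalB : Q = aS y * aS x := by
    have step1 : Q = ∑ j ∈ tb, ∑ l ∈ qb j,
        th1 (b1 j) (eb j l) (fb j l) (∑ i ∈ ta, ∑ k ∈ qa i, a1 i ⊗ₜ[ℂ] (ea i k ⊗ₜ[ℂ] fa i k)) := by
      rw [hQ]
      refine Finset.sum_congr rfl fun j _ => Finset.sum_congr rfl fun l _ => ?_
      rw [map_sum]
      refine Finset.sum_congr rfl fun i _ => ?_
      rw [map_sum]
      exact Finset.sum_congr rfl fun k _ => rfl
    have step2 : Q = ∑ i ∈ ta, ∑ k ∈ pa i, ∑ j ∈ tb, ∑ l ∈ qb j,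
        aS (ca i k * b1 j) * ((da i k * eb j l) * (aS (fb j l) * aS (a2 i))) := by
      rw [step1, ← Lx]
      have expand : ∀ j l, th1 (b1 j) (eb j l) (fb j l)
            (∑ i ∈ ta, ∑ k ∈ pa i, ca i k ⊗ₜ[ℂ] (da i k ⊗ₜ[ℂ] a2 i))
          = ∑ i ∈ ta, ∑ k ∈ pa i,
            aS (ca i k * b1 j) * ((da i k * eb j l) * (aS (fb j l) * aS (a2 i))) := by
        intro j l
        rw [map_sum]
        exact Finset.sum_congr rfl fun i _ => by rw [map_sum]; rfl
      rw [Finset.sum_congr rfl fun j _ => Finset.sum_congr rfl fun l _ => expand j l]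
      exact (sum4_comm _ _ _ _ _).symm
    have step3 : Q = ∑ i ∈ ta, ∑ j ∈ tb, ∑ k ∈ pa i, ∑ l ∈ pb j,
        aS (ca i k * cb j l) * ((da i k * db j l) * (aS (b2 j) * aS (a2 i))) := by
      rw [step2]
      have regroup : ∀ i k, ∑ j ∈ tb, ∑ l ∈ qb j,
          aS (ca i k * b1 j) * ((da i k * eb j l) * (aS (fb j l) * aS (a2 i)))
          = ∑ j ∈ tb, ∑ l ∈ pb j,
          aS (ca i k * cb j l) * ((da i k * db j l) * (aS (b2 j) * aS (a2 i))) := by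
        intro i k
        have e1 : ∑ j ∈ tb, ∑ l ∈ qb j,
            aS (ca i k * b1 j) * ((da i k * eb j l) * (aS (fb j l) * aS (a2 i)))
            = th2 (ca i k) (da i k) (a2 i)
                (∑ j ∈ tb, ∑ l ∈ qb j, b1 j ⊗ₜ[ℂ] (eb j l ⊗ₜ[ℂ] fb j l)) := by
          rw [map_sum]
          exact Finset.sum_congr rfl fun j _ => by rw [map_sum]; rfl
        rw [e1, ← Ly, map_sum]
        exact Finset.sum_congr rfl fun j _ => by rw [map_sum]; rfl
      rw [Finset.sum_congr rfl fun i _ => Finset.sum_congr rfl fun k _ => regroup i k]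
      exact Finset.sum_congr rfl fun i _ => Finset.sum_comm
    have stepC : ∑ i ∈ ta, ∑ j ∈ tb, ∑ k ∈ pa i, ∑ l ∈ pb j,
        aS (ca i k * cb j l) * ((da i k * db j l) * (aS (b2 j) * aS (a2 i)))
        = ∑ i ∈ ta, ∑ j ∈ tb,
          ((Coalgebra.counit (R := ℂ) (a1 i)) * Coalgebra.counit (R := ℂ) (b1 j))
            • (aS (b2 j) * aS (a2 i)) := by
      refine Finset.sum_congr rfl fun i _ => Finset.sum_congr rfl fun j _ => ?_
      have hrep : Coalgebra.comul (R := ℂ) (a1 i * b1 j)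
          = ∑ kl ∈ (pa i) ×ˢ (pb j), (ca i kl.1 * cb j kl.2) ⊗ₜ[ℂ] (da i kl.1 * db j kl.2) := by
        rw [Bialgebra.comul_mul, hpa i, hpb j, Finset.sum_mul_sum, Finset.sum_product]
        exact Finset.sum_congr rfl fun k _ => Finset.sum_congr rfl fun l _ =>
          Algebra.TensorProduct.tmul_mul_tmul _ _ _ _
      have hS := sum_S_mul _ _ _ hrep
      have e2 : ∑ k ∈ pa i, ∑ l ∈ pb j,
          aS (ca i k * cb j l) * ((da i k * db j l) * (aS (b2 j) * aS (a2 i)))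
          = ∑ kl ∈ (pa i) ×ˢ (pb j),
            aS (ca i kl.1 * cb j kl.2) * ((da i kl.1 * db j kl.2) * (aS (b2 j) * aS (a2 i))) :=
        (Finset.sum_product (pa i) (pb j) (fun kl => aS (ca i kl.1 * cb j kl.2) *
          ((da i kl.1 * db j kl.2) * (aS (b2 j) * aS (a2 i))))).symm
      rw [e2, collapse_S_mul hS _, Bialgebra.counit_mul]
    have stepD : ∑ i ∈ ta, ∑ j ∈ tb,
        ((Coalgebra.counit (R := ℂ) (a1 i)) * Coalgebra.counit (R := ℂ) (b1 j))
          • (aS (b2 j) * aS (a2 i)) = aS y * aS x := by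
      have inner : ∀ i, ∑ j ∈ tb,
          ((Coalgebra.counit (R := ℂ) (a1 i)) * Coalgebra.counit (R := ℂ) (b1 j))
            • (aS (b2 j) * aS (a2 i))
          = (Coalgebra.counit (R := ℂ) (a1 i)) • (aS y * aS (a2 i)) := by
        intro i
        have e3 : ∀ j, ((Coalgebra.counit (R := ℂ) (a1 i)) * Coalgebra.counit (R := ℂ) (b1 j))
            • (aS (b2 j) * aS (a2 i))
            = (Coalgebra.counit (R := ℂ) (a1 i)) •
                ((LinearMap.mulRight ℂ (aS (a2 i)) ∘ₗ aS) ((Coalgebra.counit (R := ℂ) (b1 j)) • b2 j)) := by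
          intro j; rw [map_smul, mul_smul]; rfl
        rw [Finset.sum_congr rfl fun j _ => e3 j, ← Finset.smul_sum, ← map_sum,
          sum_counit_smul _ _ _ hb]
        rfl
      rw [Finset.sum_congr rfl fun i _ => inner i]
      have e4 : ∀ i, (Coalgebra.counit (R := ℂ) (a1 i)) • (aS y * aS (a2 i))
          = (LinearMap.mulLeft ℂ (aS y) ∘ₗ aS) ((Coalgebra.counit (R := ℂ) (a1 i)) • a2 i) := by
        intro i; rw [map_smul]; rfl
      rw [Finset.sum_congr rfl fun i _ => e4 i, ← map_sum, sum_counit_smul _ _ _ ha]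
      rfl
    rw [step3, stepC, stepD]
  rw [← evalA, evalB]


lemma S_algebraMap (c : ℂ) : aS (algebraMap ℂ H c) = algebraMap ℂ H c := by
  rw [Algebra.algebraMap_eq_smul_one, map_smul, S_one]

/-- `ε ⊗ id` as an algebra hom `H ⊗ H → H`. -/
noncomputable def chi1 : H ⊗[ℂ] H →ₐ[ℂ] H :=
  (Algebra.TensorProduct.lid ℂ H).toAlgHom.comp
    (Algebra.TensorProduct.map (Bialgebra.counitAlgHom ℂ H) (AlgHom.id ℂ H))

@[simp] lemma chi1_tmul (a b : H) :
    chi1 (a ⊗ₜ[ℂ] b) = Coalgebra.counit (R := ℂ) a • b := by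
  simp [chi1]

/-- `id ⊗ ε` as an algebra hom `H ⊗ H → H`. -/
noncomputable def chi2 : H ⊗[ℂ] H →ₐ[ℂ] H :=
  (Algebra.TensorProduct.rid ℂ ℂ H).toAlgHom.comp
    (Algebra.TensorProduct.map (AlgHom.id ℂ H) (Bialgebra.counitAlgHom ℂ H))

@[simp] lemma chi2_tmul (a b : H) :
    chi2 (a ⊗ₜ[ℂ] b) = Coalgebra.counit (R := ℂ) b • a := by
  simp [chi2]

lemma chi1_comul (h : H) : chi1 (Coalgebra.comul (R := ℂ) h) = h := by
  obtain ⟨t, a, b, hr⟩ := exists_nat_repr (Coalgebra.comul (R := ℂ) h)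
  rw [hr, map_sum]
  rw [Finset.sum_congr rfl fun i _ => chi1_tmul (a i) (b i)]
  exact sum_counit_smul _ _ _ hr

lemma chi2_comul (h : H) : chi2 (Coalgebra.comul (R := ℂ) h) = h := by
  obtain ⟨t, a, b, hr⟩ := exists_nat_repr (Coalgebra.comul (R := ℂ) h)
  rw [hr, map_sum]
  rw [Finset.sum_congr rfl fun i _ => chi2_tmul (a i) (b i)]
  exact sum_smul_counit _ _ _ hr

lemma bmS_comul (h : H) :
    bm aS LinearMap.id (Coalgebra.comul (R := ℂ) h)
      = algebraMap ℂ H (Coalgebra.counit (R := ℂ) h) := by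
  obtain ⟨t, a, b, hr⟩ := exists_nat_repr (Coalgebra.comul (R := ℂ) h)
  rw [hr, map_sum]
  exact sum_S_mul _ _ _ hr

lemma bmS'_comul (h : H) :
    bm LinearMap.id aS (Coalgebra.comul (R := ℂ) h)
      = algebraMap ℂ H (Coalgebra.counit (R := ℂ) h) := by
  obtain ⟨t, a, b, hr⟩ := exists_nat_repr (Coalgebra.comul (R := ℂ) h)
  rw [hr, map_sum]
  exact sum_mul_S _ _ _ hr

lemma star_algebraMap' [StarRing H] [StarModule ℂ H] (c : ℂ) :
    star (algebraMap ℂ H c) = algebraMap ℂ H (star c) := by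
  rw [Algebra.algebraMap_eq_smul_one, Algebra.algebraMap_eq_smul_one, star_smul, star_one]

end DrinAux

open DrinAux in
/-- Let `(H, ℛ)` be a quasitriangular Hopf algebra over `ℂ` which is a flip-`*`-Hopf algebra
with `ℛ^{*⊗*} = ℛ₂₁⁻¹`.  Then the Drinfeld elements `u = ∑ S(ℛ⁽²⁾) ℛ⁽¹⁾` and
`v = ∑ ℛ⁽¹⁾ S(ℛ⁽²⁾)` satisfy `u* = u⁻¹` and `v* = v⁻¹`. -/
theorem drinfeld_elements_unitary
    (H : Type*) [Ring H] [HopfAlgebra ℂ H] [StarRing H] [StarModule ℂ H]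
    (hΔflip : ∀ (h : H) (s : Finset ℕ) (h1 h2 : ℕ → H),
      Coalgebra.comul (R := ℂ) h = ∑ i ∈ s, h1 i ⊗ₜ[ℂ] h2 i →
      Coalgebra.comul (R := ℂ) (star h) = ∑ i ∈ s, star (h2 i) ⊗ₜ[ℂ] star (h1 i))
    (hε : ∀ h : H, Coalgebra.counit (R := ℂ) (star h) = star (Coalgebra.counit (R := ℂ) h))
    (s : Finset ℕ) (R1 R2 : ℕ → H)
    (Rm Rminv : H ⊗[ℂ] H)
    (hRm : Rm = ∑ i ∈ s, R1 i ⊗ₜ[ℂ] R2 i)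
    (hRinv : Rm * Rminv = 1 ∧ Rminv * Rm = 1)
    (hqt1 : (TensorProduct.map (Coalgebra.comul (R := ℂ)) LinearMap.id) Rm =
      (∑ i ∈ s, (R1 i ⊗ₜ[ℂ] (1 : H)) ⊗ₜ[ℂ] R2 i) *
      (∑ i ∈ s, ((1 : H) ⊗ₜ[ℂ] R1 i) ⊗ₜ[ℂ] R2 i))
    (hqt2 : (TensorProduct.map LinearMap.id (Coalgebra.comul (R := ℂ))) Rm =
      (∑ i ∈ s, R1 i ⊗ₜ[ℂ] ((1 : H) ⊗ₜ[ℂ] R2 i)) *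
      (∑ i ∈ s, R1 i ⊗ₜ[ℂ] (R2 i ⊗ₜ[ℂ] (1 : H))))
    (hqt3 : ∀ h : H,
      (TensorProduct.comm ℂ H H) (Coalgebra.comul (R := ℂ) h) * Rm =
        Rm * Coalgebra.comul (R := ℂ) h)
    (hRstar : (∑ i ∈ s, star (R1 i) ⊗ₜ[ℂ] star (R2 i)) * (∑ i ∈ s, R2 i ⊗ₜ[ℂ] R1 i) = 1 ∧
      (∑ i ∈ s, R2 i ⊗ₜ[ℂ] R1 i) * (∑ i ∈ s, star (R1 i) ⊗ₜ[ℂ] star (R2 i)) = 1) :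
    let u : H := ∑ i ∈ s, HopfAlgebra.antipode (R := ℂ) (R2 i) * R1 i
    let v : H := ∑ i ∈ s, R1 i * HopfAlgebra.antipode (R := ℂ) (R2 i)
    star u * u = 1 ∧ u * star u = 1 ∧ star v * v = 1 ∧ v * star v = 1 := by
  classical
  intro u v
  have hu : u = ∑ i ∈ s, aS (R2 i) * R1 i := rfl
  have hv : v = ∑ i ∈ s, R1 i * aS (R2 i) := rfl
  clear_value u v
  set U : H ⊗[ℂ] H := ∑ i ∈ s, aS (R1 i) ⊗ₜ[ℂ] R2 i with hU
  set E1 : H := ∑ i ∈ s, Coalgebra.counit (R := ℂ) (R2 i) • R1 i with hE1def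
  set E2 : H := ∑ i ∈ s, Coalgebra.counit (R := ℂ) (R1 i) • R2 i with hE2def
  set w : H := ∑ i ∈ s, R2 i * aS (aS (R1 i)) with hwdef
  set w' : H := ∑ i ∈ s, aS (aS (R1 i)) * R2 i with hw'def
  -- comul applied to Rm
  have hcomul1 : (TensorProduct.map (Coalgebra.comul (R := ℂ)) LinearMap.id) Rm
      = ∑ i ∈ s, (Coalgebra.comul (R := ℂ) (R1 i)) ⊗ₜ[ℂ] R2 i := by
    rw [hRm, map_sum]; rfl
  have hcomul2 : (TensorProduct.map LinearMap.id (Coalgebra.comul (R := ℂ))) Rm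
      = ∑ i ∈ s, R1 i ⊗ₜ[ℂ] (Coalgebra.comul (R := ℂ) (R2 i)) := by
    rw [hRm, map_sum]; rfl
  -- step 1 : E2 = 1 and E1 = 1
  have hE2 : E2 = 1 := by
    set psi1 : (H ⊗[ℂ] H) ⊗[ℂ] H →ₐ[ℂ] H ⊗[ℂ] H :=
      Algebra.TensorProduct.map chi1 (AlgHom.id ℂ H) with hpsi1
    have happ := congrArg psi1 hqt1
    rw [map_mul] at happ
    have hL : psi1 ((TensorProduct.map (Coalgebra.comul (R := ℂ)) LinearMap.id) Rm) = Rm := by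
      rw [hcomul1, map_sum, hRm]
      exact Finset.sum_congr rfl fun i _ => by
        rw [hpsi1, Algebra.TensorProduct.map_tmul, chi1_comul]; rfl
    have hX : psi1 (∑ i ∈ s, (R1 i ⊗ₜ[ℂ] (1 : H)) ⊗ₜ[ℂ] R2 i) = (1 : H) ⊗ₜ[ℂ] E2 := by
      rw [map_sum, hE2def, TensorProduct.tmul_sum]
      refine Finset.sum_congr rfl fun i _ => ?_
      rw [hpsi1, Algebra.TensorProduct.map_tmul, chi1_tmul, TensorProduct.smul_tmul]
      rfl
    have hY : psi1 (∑ i ∈ s, ((1 : H) ⊗ₜ[ℂ] R1 i) ⊗ₜ[ℂ] R2 i) = Rm := by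
      rw [map_sum, hRm]
      refine Finset.sum_congr rfl fun i _ => ?_
      rw [hpsi1, Algebra.TensorProduct.map_tmul, chi1_tmul, Bialgebra.counit_one, one_smul]
      rfl
    rw [hL, hX, hY] at happ
    have htE2 : ((1 : H) ⊗ₜ[ℂ] E2 : H ⊗[ℂ] H) = 1 := by
      calc (1 : H) ⊗ₜ[ℂ] E2 = ((1 : H) ⊗ₜ[ℂ] E2) * (Rm * Rminv) := by rw [hRinv.1, mul_one]
        _ = (((1 : H) ⊗ₜ[ℂ] E2) * Rm) * Rminv := by rw [mul_assoc]
        _ = Rm * Rminv := by rw [← happ]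
        _ = 1 := hRinv.1
    have := congrArg chi1 htE2
    rwa [map_one, chi1_tmul, Bialgebra.counit_one, one_smul] at this
  have hE1 : E1 = 1 := by
    set psi2 : H ⊗[ℂ] (H ⊗[ℂ] H) →ₐ[ℂ] H ⊗[ℂ] H :=
      Algebra.TensorProduct.map (AlgHom.id ℂ H) chi2 with hpsi2
    have happ := congrArg psi2 hqt2
    rw [map_mul] at happ
    have hL : psi2 ((TensorProduct.map LinearMap.id (Coalgebra.comul (R := ℂ))) Rm) = Rm := by
      rw [hcomul2, map_sum, hRm]
      exact Finset.sum_congr rfl fun i _ => by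
        rw [hpsi2, Algebra.TensorProduct.map_tmul, chi2_comul]; rfl
    have hX : psi2 (∑ i ∈ s, R1 i ⊗ₜ[ℂ] ((1 : H) ⊗ₜ[ℂ] R2 i)) = E1 ⊗ₜ[ℂ] (1 : H) := by
      rw [map_sum, hE1def, TensorProduct.sum_tmul]
      refine Finset.sum_congr rfl fun i _ => ?_
      rw [hpsi2, Algebra.TensorProduct.map_tmul, chi2_tmul, ← TensorProduct.smul_tmul]
      rfl
    have hY : psi2 (∑ i ∈ s, R1 i ⊗ₜ[ℂ] (R2 i ⊗ₜ[ℂ] (1 : H))) = Rm := by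
      rw [map_sum, hRm]
      refine Finset.sum_congr rfl fun i _ => ?_
      rw [hpsi2, Algebra.TensorProduct.map_tmul, chi2_tmul, Bialgebra.counit_one, one_smul]
      rfl
    rw [hL, hX, hY] at happ
    have htE1 : (E1 ⊗ₜ[ℂ] (1 : H) : H ⊗[ℂ] H) = 1 := by
      calc E1 ⊗ₜ[ℂ] (1 : H) = (E1 ⊗ₜ[ℂ] (1 : H)) * (Rm * Rminv) := by rw [hRinv.1, mul_one]
        _ = ((E1 ⊗ₜ[ℂ] (1 : H)) * Rm) * Rminv := by rw [mul_assoc]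
        _ = Rm * Rminv := by rw [← happ]
        _ = 1 := hRinv.1
    have := congrArg chi2 htE1
    rwa [map_one, chi2_tmul, Bialgebra.counit_one, one_smul] at this
  -- step 2 : U is a two-sided inverse of Rm
  have hXY : (∑ i ∈ s, (R1 i ⊗ₜ[ℂ] (1 : H)) ⊗ₜ[ℂ] R2 i) *
      (∑ i ∈ s, ((1 : H) ⊗ₜ[ℂ] R1 i) ⊗ₜ[ℂ] R2 i)
      = ∑ i ∈ s, ∑ j ∈ s, (R1 i ⊗ₜ[ℂ] R1 j) ⊗ₜ[ℂ] (R2 i * R2 j) := by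
    rw [Finset.sum_mul_sum]
    exact Finset.sum_congr rfl fun i _ => Finset.sum_congr rfl fun j _ => by
      rw [Algebra.TensorProduct.tmul_mul_tmul, Algebra.TensorProduct.tmul_mul_tmul,
        mul_one, one_mul]
  have honeone : (1 : H ⊗[ℂ] H) = (1 : H) ⊗ₜ[ℂ] (1 : H) := Algebra.TensorProduct.one_def
  have hUR : U * Rm = 1 := by
    have happ := congrArg (LinearMap.rTensor H (bm aS LinearMap.id)) hqt1
    rw [hXY, hcomul1, map_sum, map_sum] at happ
    have hL : ∑ i ∈ s, (LinearMap.rTensor H (bm aS LinearMap.id))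
        ((Coalgebra.comul (R := ℂ) (R1 i)) ⊗ₜ[ℂ] R2 i) = (1 : H) ⊗ₜ[ℂ] E2 := by
      rw [hE2def, TensorProduct.tmul_sum]
      refine Finset.sum_congr rfl fun i _ => ?_
      rw [LinearMap.rTensor_tmul, bmS_comul, Algebra.algebraMap_eq_smul_one,
        TensorProduct.smul_tmul]
    have hR : ∑ i ∈ s, (LinearMap.rTensor H (bm aS LinearMap.id))
        (∑ j ∈ s, (R1 i ⊗ₜ[ℂ] R1 j) ⊗ₜ[ℂ] (R2 i * R2 j)) = U * Rm := by
      rw [hU, hRm, Finset.sum_mul_sum]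
      refine Finset.sum_congr rfl fun i _ => ?_
      rw [map_sum]
      refine Finset.sum_congr rfl fun j _ => ?_
      rw [LinearMap.rTensor_tmul, Algebra.TensorProduct.tmul_mul_tmul]
      rfl
    rw [hL, hR] at happ
    rw [← happ, hE2, ← honeone]
  have hRU : Rm * U = 1 := by
    have happ := congrArg (LinearMap.rTensor H (bm LinearMap.id aS)) hqt1
    rw [hXY, hcomul1, map_sum, map_sum] at happ
    have hL : ∑ i ∈ s, (LinearMap.rTensor H (bm LinearMap.id aS))
        ((Coalgebra.comul (R := ℂ) (R1 i)) ⊗ₜ[ℂ] R2 i) = (1 : H) ⊗ₜ[ℂ] E2 := by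
      rw [hE2def, TensorProduct.tmul_sum]
      refine Finset.sum_congr rfl fun i _ => ?_
      rw [LinearMap.rTensor_tmul, bmS'_comul, Algebra.algebraMap_eq_smul_one,
        TensorProduct.smul_tmul]
    have hR : ∑ i ∈ s, (LinearMap.rTensor H (bm LinearMap.id aS))
        (∑ j ∈ s, (R1 i ⊗ₜ[ℂ] R1 j) ⊗ₜ[ℂ] (R2 i * R2 j)) = Rm * U := by
      rw [hU, hRm, Finset.sum_mul_sum]
      refine Finset.sum_congr rfl fun i _ => ?_
      rw [map_sum]
      refine Finset.sum_congr rfl fun j _ => ?_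
      rw [LinearMap.rTensor_tmul, Algebra.TensorProduct.tmul_mul_tmul]
      rfl
    rw [hL, hR] at happ
    rw [← happ, hE2, ← honeone]
  -- step 3 : (S ⊗ S) R = R
  have hW : (∑ i ∈ s, aS (R1 i) ⊗ₜ[ℂ] aS (R2 i)) = Rm := by
    set ΦA : H ⊗[ℂ] H →ₐ[ℂ] H ⊗[ℂ] (H ⊗[ℂ] H) :=
      Algebra.TensorProduct.map (AlgHom.id ℂ H) Algebra.TensorProduct.includeRight with hΦA
    set ΦB : H ⊗[ℂ] H →ₐ[ℂ] H ⊗[ℂ] (H ⊗[ℂ] H) :=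
      Algebra.TensorProduct.map (AlgHom.id ℂ H)
        (Algebra.TensorProduct.includeLeft (S := ℂ)) with hΦB
    set Φ2 : H ⊗[ℂ] H →ₐ[ℂ] H ⊗[ℂ] (H ⊗[ℂ] H) :=
      Algebra.TensorProduct.map (AlgHom.id ℂ H) (Bialgebra.comulAlgHom ℂ H) with hΦ2
    have hArm : ΦA Rm = ∑ i ∈ s, R1 i ⊗ₜ[ℂ] ((1 : H) ⊗ₜ[ℂ] R2 i) := by
      rw [hRm, map_sum]
      exact Finset.sum_congr rfl fun i _ => by
        rw [hΦA, Algebra.TensorProduct.map_tmul]; rfl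
    have hAU : ΦA U = ∑ i ∈ s, aS (R1 i) ⊗ₜ[ℂ] ((1 : H) ⊗ₜ[ℂ] R2 i) := by
      rw [hU, map_sum]
      exact Finset.sum_congr rfl fun i _ => by
        rw [hΦA, Algebra.TensorProduct.map_tmul]; rfl
    have hBrm : ΦB Rm = ∑ i ∈ s, R1 i ⊗ₜ[ℂ] (R2 i ⊗ₜ[ℂ] (1 : H)) := by
      rw [hRm, map_sum]
      exact Finset.sum_congr rfl fun i _ => by
        rw [hΦB, Algebra.TensorProduct.map_tmul]; rfl
    have hBU : ΦB U = ∑ i ∈ s, aS (R1 i) ⊗ₜ[ℂ] (R2 i ⊗ₜ[ℂ] (1 : H)) := by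
      rw [hU, map_sum]
      exact Finset.sum_congr rfl fun i _ => by
        rw [hΦB, Algebra.TensorProduct.map_tmul]; rfl
    have hΦ2rm : Φ2 Rm = (TensorProduct.map LinearMap.id (Coalgebra.comul (R := ℂ))) Rm := by
      rw [hRm, map_sum, map_sum]
      exact Finset.sum_congr rfl fun i _ => by
        rw [hΦ2, Algebra.TensorProduct.map_tmul]; rfl
    have hΦ2U : Φ2 U = ∑ i ∈ s, aS (R1 i) ⊗ₜ[ℂ] (Coalgebra.comul (R := ℂ) (R2 i)) := by
      rw [hU, map_sum]
      exact Finset.sum_congr rfl fun i _ => by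
        rw [hΦ2, Algebra.TensorProduct.map_tmul]; rfl
    -- Φ2 U equals ΦB U * ΦA U
    have hkey : Φ2 U = ΦB U * ΦA U := by
      have h1 : Φ2 U * Φ2 Rm = 1 := by rw [← map_mul, hUR, map_one]
      have h2 : Φ2 Rm * (ΦB U * ΦA U) = 1 := by
        rw [hΦ2rm, hqt2, ← hArm, ← hBrm]
        calc ΦA Rm * ΦB Rm * (ΦB U * ΦA U)
            = ΦA Rm * (ΦB Rm * ΦB U) * ΦA U := by rw [mul_assoc, mul_assoc, mul_assoc]
          _ = ΦA Rm * ΦA U := by rw [← map_mul, hRU, map_one, mul_one]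
          _ = 1 := by rw [← map_mul, hRU, map_one]
      calc Φ2 U = Φ2 U * (Φ2 Rm * (ΦB U * ΦA U)) := by rw [h2, mul_one]
        _ = (Φ2 U * Φ2 Rm) * (ΦB U * ΦA U) := by rw [mul_assoc]
        _ = ΦB U * ΦA U := by rw [h1, one_mul]
    -- apply id ⊗ (S * id) to both sides
    have happ := congrArg (LinearMap.lTensor H (bm aS LinearMap.id)) hkey
    have hL : (LinearMap.lTensor H (bm aS LinearMap.id)) (Φ2 U) = 1 := by
      rw [hΦ2U, map_sum]
      have e : ∀ i, (LinearMap.lTensor H (bm aS LinearMap.id))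
          (aS (R1 i) ⊗ₜ[ℂ] (Coalgebra.comul (R := ℂ) (R2 i)))
          = Coalgebra.counit (R := ℂ) (R2 i) • (aS (R1 i) ⊗ₜ[ℂ] (1 : H)) := by
        intro i
        rw [LinearMap.lTensor_tmul, bmS_comul, Algebra.algebraMap_eq_smul_one,
          TensorProduct.tmul_smul]
      rw [Finset.sum_congr rfl fun i _ => e i]
      have e2 : ∀ i, (Coalgebra.counit (R := ℂ) (R2 i)) • (aS (R1 i) ⊗ₜ[ℂ] (1 : H))
          = ((LinearMap.rTensor H aS) ((Coalgebra.counit (R := ℂ) (R2 i) • R1 i) ⊗ₜ[ℂ] (1 : H))) := by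
        intro i
        rw [LinearMap.rTensor_tmul, map_smul, TensorProduct.smul_tmul']
      rw [Finset.sum_congr rfl fun i _ => e2 i, ← map_sum, ← TensorProduct.sum_tmul, ← hE1def,
        hE1, LinearMap.rTensor_tmul, S_one, ← honeone]
    have hR : (LinearMap.lTensor H (bm aS LinearMap.id)) (ΦB U * ΦA U)
        = (∑ i ∈ s, aS (R1 i) ⊗ₜ[ℂ] aS (R2 i)) * U := by
      rw [hBU, hAU, Finset.sum_mul_sum, hU, Finset.sum_mul_sum, map_sum]
      refine Finset.sum_congr rfl fun i _ => ?_
      rw [map_sum]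
      refine Finset.sum_congr rfl fun j _ => ?_
      rw [Algebra.TensorProduct.tmul_mul_tmul, Algebra.TensorProduct.tmul_mul_tmul,
        mul_one, one_mul, LinearMap.lTensor_tmul, Algebra.TensorProduct.tmul_mul_tmul]
      rfl
    rw [hL, hR] at happ
    calc (∑ i ∈ s, aS (R1 i) ⊗ₜ[ℂ] aS (R2 i))
        = (∑ i ∈ s, aS (R1 i) ⊗ₜ[ℂ] aS (R2 i)) * (U * Rm) := by rw [hUR, mul_one]
      _ = ((∑ i ∈ s, aS (R1 i) ⊗ₜ[ℂ] aS (R2 i)) * U) * Rm := by rw [mul_assoc]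
      _ = Rm := by rw [← happ, one_mul]
  -- step 4 : the key commutation sum
  have key1 : ∀ (h : H) (t : Finset ℕ) (a b : ℕ → H),
      Coalgebra.comul (R := ℂ) h = ∑ j ∈ t, a j ⊗ₜ[ℂ] b j →
      ∑ j ∈ t, aS (b j) * (u * a j) = Coalgebra.counit (R := ℂ) h • u := by
    intro h t a b hr
    have hq3 := hqt3 h
    have hcm : (TensorProduct.comm ℂ H H) (Coalgebra.comul (R := ℂ) h)
        = ∑ j ∈ t, b j ⊗ₜ[ℂ] a j := by
      rw [hr, map_sum]
      exact Finset.sum_congr rfl fun j _ => rfl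
    rw [hcm, hr, hRm, Finset.sum_mul_sum, Finset.sum_mul_sum] at hq3
    have happ := congrArg (bm' LinearMap.id aS) hq3
    rw [map_sum, map_sum] at happ
    have hL : ∑ j ∈ t, (bm' LinearMap.id aS) (∑ i ∈ s, (b j ⊗ₜ[ℂ] a j) * (R1 i ⊗ₜ[ℂ] R2 i))
        = Coalgebra.counit (R := ℂ) h • u := by
      have e1 : ∀ j, (bm' LinearMap.id aS) (∑ i ∈ s, (b j ⊗ₜ[ℂ] a j) * (R1 i ⊗ₜ[ℂ] R2 i))
          = ∑ i ∈ s, aS (R2 i) * (aS (a j) * (b j * R1 i)) := by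
        intro j
        rw [map_sum]
        refine Finset.sum_congr rfl fun i _ => ?_
        rw [Algebra.TensorProduct.tmul_mul_tmul, bm'_tmul, antipode_mul, mul_assoc]
        rfl
      rw [Finset.sum_congr rfl fun j _ => e1 j, Finset.sum_comm]
      have e2 : ∀ i, ∑ j ∈ t, aS (R2 i) * (aS (a j) * (b j * R1 i))
          = Coalgebra.counit (R := ℂ) h • (aS (R2 i) * R1 i) := by
        intro i
        rw [← Finset.mul_sum, collapse_S_mul (sum_S_mul _ _ _ hr) (R1 i), mul_smul_comm]
      rw [Finset.sum_congr rfl fun i _ => e2 i, ← Finset.smul_sum, hu]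
    have hR : ∑ i ∈ s, (bm' LinearMap.id aS) (∑ j ∈ t, (R1 i ⊗ₜ[ℂ] R2 i) * (a j ⊗ₜ[ℂ] b j))
        = ∑ j ∈ t, aS (b j) * (u * a j) := by
      have e1 : ∀ i, (bm' LinearMap.id aS) (∑ j ∈ t, (R1 i ⊗ₜ[ℂ] R2 i) * (a j ⊗ₜ[ℂ] b j))
          = ∑ j ∈ t, aS (b j) * (aS (R2 i) * (R1 i * a j)) := by
        intro i
        rw [map_sum]
        refine Finset.sum_congr rfl fun j _ => ?_
        rw [Algebra.TensorProduct.tmul_mul_tmul, bm'_tmul, antipode_mul, mul_assoc]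
        rfl
      rw [Finset.sum_congr rfl fun i _ => e1 i, Finset.sum_comm]
      refine Finset.sum_congr rfl fun j _ => ?_
      rw [← Finset.mul_sum]
      congr 1
      rw [hu, Finset.sum_mul]
      exact Finset.sum_congr rfl fun i _ => (mul_assoc _ _ _).symm
    rw [hL, hR] at happ
    exact happ.symm
  -- step 5 : u h = S² h u
  have huh : ∀ h : H, u * h = aS (aS h) * u := by
    intro h
    obtain ⟨t, a, b, hr⟩ := exists_nat_repr (Coalgebra.comul (R := ℂ) h)
    choose p c d hp using fun j => exists_nat_repr (Coalgebra.comul (R := ℂ) (a j))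
    choose q e f hq using fun j => exists_nat_repr (Coalgebra.comul (R := ℂ) (b j))
    have L5 := coassoc_repr hr (fun j _ => hp j) (fun j _ => hq j)
    set Θ : H ⊗[ℂ] (H ⊗[ℂ] H) →ₗ[ℂ] H :=
      (bm' LinearMap.id (LinearMap.mulRight ℂ u)).comp
        (LinearMap.lTensor H (bm' aS (aS ∘ₗ aS))) with hΘ
    have hΘt : ∀ x y z : H, Θ (x ⊗ₜ[ℂ] (y ⊗ₜ[ℂ] z)) = ((aS (aS z) * aS y) * u) * x :=
      fun x y z => rfl
    have happ := congrArg Θ L5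
    rw [map_sum, map_sum] at happ
    have hL : ∑ j ∈ t, Θ (∑ k ∈ p j, c j k ⊗ₜ[ℂ] (d j k ⊗ₜ[ℂ] b j)) = aS (aS h) * u := by
      have e1 : ∀ j, Θ (∑ k ∈ p j, c j k ⊗ₜ[ℂ] (d j k ⊗ₜ[ℂ] b j))
          = Coalgebra.counit (R := ℂ) (a j) • (aS (aS (b j)) * u) := by
        intro j
        rw [map_sum]
        have e2 : ∀ k, Θ (c j k ⊗ₜ[ℂ] (d j k ⊗ₜ[ℂ] b j))
            = aS (aS (b j)) * (aS (d j k) * (u * c j k)) := by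
          intro k
          rw [hΘt, mul_assoc, mul_assoc]
        rw [Finset.sum_congr rfl fun k _ => e2 k, ← Finset.mul_sum,
          key1 (a j) (p j) (c j) (d j) (hp j), mul_smul_comm]
      rw [Finset.sum_congr rfl fun j _ => e1 j]
      have e3 : ∀ j, Coalgebra.counit (R := ℂ) (a j) • (aS (aS (b j)) * u)
          = ((aS ∘ₗ aS) (Coalgebra.counit (R := ℂ) (a j) • b j)) * u := by
        intro j
        rw [map_smul, smul_mul_assoc]
        rfl
      rw [Finset.sum_congr rfl fun j _ => e3 j, ← Finset.sum_mul, ← map_sum,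
        sum_counit_smul _ _ _ hr]
      rfl
    have hR : ∑ j ∈ t, Θ (∑ k ∈ q j, a j ⊗ₜ[ℂ] (e j k ⊗ₜ[ℂ] f j k)) = u * h := by
      have e1 : ∀ j, Θ (∑ k ∈ q j, a j ⊗ₜ[ℂ] (e j k ⊗ₜ[ℂ] f j k))
          = Coalgebra.counit (R := ℂ) (b j) • (u * a j) := by
        intro j
        rw [map_sum]
        have e2 : ∀ k, Θ (a j ⊗ₜ[ℂ] (e j k ⊗ₜ[ℂ] f j k))
            = aS (e j k * aS (f j k)) * (u * a j) := by
          intro k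
          rw [hΘt, mul_assoc, antipode_mul]
        rw [Finset.sum_congr rfl fun k _ => e2 k, ← Finset.sum_mul, ← map_sum,
          sum_mul_S _ _ _ (hq j), S_algebraMap, ← Algebra.smul_def]
      rw [Finset.sum_congr rfl fun j _ => e1 j]
      have e3 : ∀ j, Coalgebra.counit (R := ℂ) (b j) • (u * a j)
          = u * (Coalgebra.counit (R := ℂ) (b j) • a j) := by
        intro j; rw [mul_smul_comm]
      rw [Finset.sum_congr rfl fun j _ => e3 j, ← Finset.mul_sum, sum_smul_counit _ _ _ hr]
    rw [hL, hR] at happ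
    exact happ.symm
  -- step 6
  have hRuR : ∑ j ∈ s, R2 j * (u * R1 j) = 1 := by
    set Ψ : H ⊗[ℂ] (H ⊗[ℂ] H) →ₗ[ℂ] H :=
      (bm' LinearMap.id LinearMap.id).comp (LinearMap.lTensor H (bm LinearMap.id aS)) with hΨ
    have hΨt : ∀ x y z : H, Ψ (x ⊗ₜ[ℂ] (y ⊗ₜ[ℂ] z)) = (y * aS z) * x := fun x y z => rfl
    have hAB : (∑ i ∈ s, R1 i ⊗ₜ[ℂ] ((1 : H) ⊗ₜ[ℂ] R2 i)) *
        (∑ i ∈ s, R1 i ⊗ₜ[ℂ] (R2 i ⊗ₜ[ℂ] (1 : H)))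
        = ∑ i ∈ s, ∑ j ∈ s, (R1 i * R1 j) ⊗ₜ[ℂ] (R2 j ⊗ₜ[ℂ] R2 i) := by
      rw [Finset.sum_mul_sum]
      exact Finset.sum_congr rfl fun i _ => Finset.sum_congr rfl fun j _ => by
        rw [Algebra.TensorProduct.tmul_mul_tmul, Algebra.TensorProduct.tmul_mul_tmul,
          mul_one, one_mul]
    have happ := congrArg Ψ hqt2
    rw [hAB, hcomul2, map_sum, map_sum] at happ
    have hL : ∑ i ∈ s, Ψ (R1 i ⊗ₜ[ℂ] (Coalgebra.comul (R := ℂ) (R2 i))) = 1 := by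
      have e1 : ∀ i, Ψ (R1 i ⊗ₜ[ℂ] (Coalgebra.comul (R := ℂ) (R2 i)))
          = Coalgebra.counit (R := ℂ) (R2 i) • R1 i := by
        intro i
        rw [hΨ, LinearMap.comp_apply, LinearMap.lTensor_tmul, bmS'_comul]
        show algebraMap ℂ H (Coalgebra.counit (R := ℂ) (R2 i)) * R1 i = _
        rw [← Algebra.smul_def]
      rw [Finset.sum_congr rfl fun i _ => e1 i, ← hE1def, hE1]
    have hR : ∑ i ∈ s, Ψ (∑ j ∈ s, (R1 i * R1 j) ⊗ₜ[ℂ] (R2 j ⊗ₜ[ℂ] R2 i))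
        = ∑ j ∈ s, R2 j * (u * R1 j) := by
      have e1 : ∀ i, Ψ (∑ j ∈ s, (R1 i * R1 j) ⊗ₜ[ℂ] (R2 j ⊗ₜ[ℂ] R2 i))
          = ∑ j ∈ s, R2 j * (aS (R2 i) * (R1 i * R1 j)) := by
        intro i
        rw [map_sum]
        refine Finset.sum_congr rfl fun j _ => ?_
        rw [hΨt, mul_assoc]
      rw [Finset.sum_congr rfl fun i _ => e1 i, Finset.sum_comm]
      refine Finset.sum_congr rfl fun j _ => ?_
      rw [← Finset.mul_sum]
      congr 1
      have e2 : ∀ i, aS (R2 i) * (R1 i * R1 j) = (aS (R2 i) * R1 i) * R1 j :=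
        fun i => (mul_assoc _ _ _).symm
      rw [Finset.sum_congr rfl fun i _ => e2 i, ← Finset.sum_mul, hu]
    rw [hL, hR] at happ
    exact happ.symm
  -- step 7 : star and antipode commute
  have hSstar : ∀ h : H, aS (star h) = star (aS h) := by
    let T : H →ₗ[ℂ] H :=
      { toFun := fun x => star (aS (star x))
        map_add' := by intros; simp
        map_smul' := by intros; simp [star_smul] }
    have hTval : ∀ x : H, T x = star (aS (star x)) := fun x => rfl
    have claim1 : ∀ (x : H) (t : Finset ℕ) (a b : ℕ → H),
        Coalgebra.comul (R := ℂ) x = ∑ j ∈ t, a j ⊗ₜ[ℂ] b j →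
        ∑ j ∈ t, T (a j) * b j = algebraMap ℂ H (Coalgebra.counit (R := ℂ) x) := by
      intro x t a b hr
      have hflip := hΔflip x t a b hr
      have hax := sum_mul_S _ _ _ hflip
      have := congrArg star hax
      rw [star_sum] at this
      have e1 : ∀ j, star (star (b j) * aS (star (a j))) = T (a j) * b j := by
        intro j
        rw [star_mul, star_star, hTval]
      rw [Finset.sum_congr rfl fun j _ => e1 j, star_algebraMap', hε, star_star] at this
      exact this
    have main : ∀ h : H, T h = aS h := by
      intro h
      obtain ⟨t, a, b, hr⟩ := exists_nat_repr (Coalgebra.comul (R := ℂ) h)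
      choose p c d hp using fun j => exists_nat_repr (Coalgebra.comul (R := ℂ) (a j))
      choose q e f hq using fun j => exists_nat_repr (Coalgebra.comul (R := ℂ) (b j))
      have L5 := coassoc_repr hr (fun j _ => hp j) (fun j _ => hq j)
      set Θ : H ⊗[ℂ] (H ⊗[ℂ] H) →ₗ[ℂ] H :=
        (bm T LinearMap.id).comp (LinearMap.lTensor H (bm LinearMap.id aS)) with hΘ
      have hΘt : ∀ x y z : H, Θ (x ⊗ₜ[ℂ] (y ⊗ₜ[ℂ] z)) = T x * (y * aS z) := fun x y z => rfl
      have happ := congrArg Θ L5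
      rw [map_sum, map_sum] at happ
      have hL : ∑ j ∈ t, Θ (∑ k ∈ p j, c j k ⊗ₜ[ℂ] (d j k ⊗ₜ[ℂ] b j)) = aS h := by
        have e1 : ∀ j, Θ (∑ k ∈ p j, c j k ⊗ₜ[ℂ] (d j k ⊗ₜ[ℂ] b j))
            = Coalgebra.counit (R := ℂ) (a j) • aS (b j) := by
          intro j
          rw [map_sum]
          have e2 : ∀ k, Θ (c j k ⊗ₜ[ℂ] (d j k ⊗ₜ[ℂ] b j))
              = (T (c j k) * d j k) * aS (b j) := by
            intro k
            rw [hΘt, ← mul_assoc]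
          rw [Finset.sum_congr rfl fun k _ => e2 k, ← Finset.sum_mul,
            claim1 (a j) (p j) (c j) (d j) (hp j), ← Algebra.smul_def]
        rw [Finset.sum_congr rfl fun j _ => e1 j]
        have e3 : ∀ j, Coalgebra.counit (R := ℂ) (a j) • aS (b j)
            = aS (Coalgebra.counit (R := ℂ) (a j) • b j) := by
          intro j; rw [map_smul]
        rw [Finset.sum_congr rfl fun j _ => e3 j, ← map_sum, sum_counit_smul _ _ _ hr]
      have hR : ∑ j ∈ t, Θ (∑ k ∈ q j, a j ⊗ₜ[ℂ] (e j k ⊗ₜ[ℂ] f j k)) = T h := by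
        have e1 : ∀ j, Θ (∑ k ∈ q j, a j ⊗ₜ[ℂ] (e j k ⊗ₜ[ℂ] f j k))
            = Coalgebra.counit (R := ℂ) (b j) • T (a j) := by
          intro j
          rw [map_sum]
          have e2 : ∀ k, Θ (a j ⊗ₜ[ℂ] (e j k ⊗ₜ[ℂ] f j k))
              = T (a j) * (e j k * aS (f j k)) := fun k => hΘt _ _ _
          rw [Finset.sum_congr rfl fun k _ => e2 k, ← Finset.mul_sum,
            sum_mul_S _ _ _ (hq j), ← Algebra.commutes, ← Algebra.smul_def]
        rw [Finset.sum_congr rfl fun j _ => e1 j]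
        have e3 : ∀ j, Coalgebra.counit (R := ℂ) (b j) • T (a j)
            = T (Coalgebra.counit (R := ℂ) (b j) • a j) := by
          intro j; rw [map_smul]
        rw [Finset.sum_congr rfl fun j _ => e3 j, ← map_sum, sum_smul_counit _ _ _ hr]
      rw [hL, hR] at happ
      exact happ.symm
    intro h
    have := main (star h)
    rw [hTval, star_star] at this
    exact this.symm
  -- step 8 : star u = w, star v = w'
  set Rstar : H ⊗[ℂ] H := ∑ i ∈ s, star (R1 i) ⊗ₜ[ℂ] star (R2 i) with hRstardef
  have hRstarU : Rstar = ∑ i ∈ s, R2 i ⊗ₜ[ℂ] aS (R1 i) := by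
    set τ := Algebra.TensorProduct.comm ℂ H H with hτ
    have hτR : τ Rm = ∑ i ∈ s, R2 i ⊗ₜ[ℂ] R1 i := by
      rw [hRm, map_sum]
      exact Finset.sum_congr rfl fun i _ => rfl
    have hτU : τ U = ∑ i ∈ s, R2 i ⊗ₜ[ℂ] aS (R1 i) := by
      rw [hU, map_sum]
      exact Finset.sum_congr rfl fun i _ => rfl
    have h1 : (∑ i ∈ s, R2 i ⊗ₜ[ℂ] R1 i) * (∑ i ∈ s, R2 i ⊗ₜ[ℂ] aS (R1 i)) = 1 := by
      rw [← hτR, ← hτU, ← map_mul, hRU, map_one]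
    calc Rstar = Rstar * ((∑ i ∈ s, R2 i ⊗ₜ[ℂ] R1 i) * (∑ i ∈ s, R2 i ⊗ₜ[ℂ] aS (R1 i))) := by
          rw [h1, mul_one]
      _ = (Rstar * (∑ i ∈ s, R2 i ⊗ₜ[ℂ] R1 i)) * (∑ i ∈ s, R2 i ⊗ₜ[ℂ] aS (R1 i)) := by
          rw [mul_assoc]
      _ = ∑ i ∈ s, R2 i ⊗ₜ[ℂ] aS (R1 i) := by rw [hRstardef, hRstar.1, one_mul]
  have hstaru : star u = w := by
    have hsu : star u = (bm LinearMap.id aS) Rstar := by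
      rw [hu, star_sum, hRstardef, map_sum]
      refine Finset.sum_congr rfl fun i _ => ?_
      rw [star_mul, bm_tmul, hSstar]
      rfl
    rw [hsu, hRstarU, map_sum, hwdef]
    exact Finset.sum_congr rfl fun i _ => rfl
  have hstarv : star v = w' := by
    have hsv : star v = (bm' LinearMap.id aS) Rstar := by
      rw [hv, star_sum, hRstardef, map_sum]
      refine Finset.sum_congr rfl fun i _ => ?_
      rw [star_mul, bm'_tmul, hSstar]
      rfl
    rw [hsv, hRstarU, map_sum, hw'def]
    exact Finset.sum_congr rfl fun i _ => rfl
  -- step 9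
  have hwu : w * u = 1 := by
    rw [hwdef, Finset.sum_mul]
    have e : ∀ i, (R2 i * aS (aS (R1 i))) * u = R2 i * (u * R1 i) := by
      intro i
      rw [mul_assoc, ← huh (R1 i)]
    rw [Finset.sum_congr rfl fun i _ => e i, hRuR]
  have hW2 : (∑ i ∈ s, aS (aS (R1 i)) ⊗ₜ[ℂ] aS (aS (R2 i))) = Rm := by
    have := congrArg (TensorProduct.map aS aS) hW
    rw [map_sum, hRm, map_sum] at this
    calc ∑ i ∈ s, aS (aS (R1 i)) ⊗ₜ[ℂ] aS (aS (R2 i))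
        = ∑ i ∈ s, (TensorProduct.map aS aS) (aS (R1 i) ⊗ₜ[ℂ] aS (R2 i)) :=
          Finset.sum_congr rfl fun i _ => rfl
      _ = ∑ i ∈ s, (TensorProduct.map aS aS) (R1 i ⊗ₜ[ℂ] R2 i) := this
      _ = ∑ i ∈ s, aS (R1 i) ⊗ₜ[ℂ] aS (R2 i) := Finset.sum_congr rfl fun i _ => rfl
      _ = Rm := hW
  have hsum47 : ∑ i ∈ s, aS (aS (R2 i)) * aS (aS (aS (aS (R1 i)))) = w := by
    have := congrArg (bm' (aS ∘ₗ aS) LinearMap.id) hW2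
    rw [map_sum, hRm, map_sum] at this
    rw [hwdef]
    exact this
  have huw : u * w = 1 := by
    rw [hwdef, Finset.mul_sum]
    have e : ∀ i, u * (R2 i * aS (aS (R1 i)))
        = (aS (aS (R2 i)) * aS (aS (aS (aS (R1 i))))) * u := by
      intro i
      rw [← mul_assoc, huh (R2 i), mul_assoc, huh (aS (aS (R1 i))), ← mul_assoc]
    rw [Finset.sum_congr rfl fun i _ => e i, ← Finset.sum_mul, hsum47, hwu]
  -- step 10
  have hvS : v = aS u := by
    have := congrArg (bm LinearMap.id aS) hW
    rw [map_sum, hRm, map_sum] at this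
    calc v = ∑ i ∈ s, (bm LinearMap.id aS) (R1 i ⊗ₜ[ℂ] R2 i) := by
          rw [hv]; exact Finset.sum_congr rfl fun i _ => rfl
      _ = ∑ i ∈ s, (bm LinearMap.id aS) (aS (R1 i) ⊗ₜ[ℂ] aS (R2 i)) := this.symm
      _ = ∑ i ∈ s, aS (aS (R2 i) * R1 i) := by
          refine Finset.sum_congr rfl fun i _ => ?_
          rw [bm_tmul, antipode_mul]
          rfl
      _ = aS u := by rw [← map_sum, hu]
  have hw'S : w' = aS w := by
    have := congrArg (bm (aS ∘ₗ aS) LinearMap.id) hW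
    rw [map_sum, hRm, map_sum] at this
    calc w' = ∑ i ∈ s, (bm (aS ∘ₗ aS) LinearMap.id) (R1 i ⊗ₜ[ℂ] R2 i) := by
          rw [hw'def]; exact Finset.sum_congr rfl fun i _ => rfl
      _ = ∑ i ∈ s, (bm (aS ∘ₗ aS) LinearMap.id) (aS (R1 i) ⊗ₜ[ℂ] aS (R2 i)) := this.symm
      _ = ∑ i ∈ s, aS (R2 i * aS (aS (R1 i))) := by
          refine Finset.sum_congr rfl fun i _ => ?_
          rw [bm_tmul, antipode_mul]
          rfl
      _ = aS w := by rw [← map_sum, hwdef]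
  refine ⟨by rw [hstaru, hwu], by rw [hstaru, huw], ?_, ?_⟩
  · rw [hstarv, hw'S, hvS, ← antipode_mul, huw, S_one]
  · rw [hstarv, hw'S, hvS, ← antipode_mul, hwu, S_one]
end

section
/- Let G ⊆ X be a subgroup of a finite group with a transversal M ∋ e of the right cosets (each x ∈ X factorizes uniquely as x = us with u ∈ G, s ∈ M). Define s▷u ∈ G and s◁u ∈ M by su = (s▷u)(s◁u), and τ(s,t) ∈ G, s·t ∈ M by st = τ(s,t)(s·t). For an object V (a G×(G\X)-graded/action space with ⟨ξ◁̄u⟩ = ⟨ξ⟩◁u) define the conjugate V̄ with ⟨v̄⟩ = ⟨v⟩^R and v̄◁̄u = (v◁̄(⟨v⟩^R▷u))‾, where t^R is the right inverse (t·t^R = e), assumed unique. Then ◁̄ on V̄ is a right G-action: (v̄◁̄u)◁̄w = v̄◁̄(uw). -/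
/-!
With `▷`, `◁`, `^R` written `trl`, `trr`, `Rinv`, put `t = s^R`. Unfolding, `(v̄ ◁̄ u) ◁̄ w = v ◁̄ ((t ▷ u) · ((s ◁ (t ▷ u))^R ▷ w))`, while
`v̄ ◁̄ (u w) = v ◁̄ (t ▷ (u w)) = v ◁̄ ((t ▷ u) · ((t ◁ u) ▷ w))`. So everything reduces to
`(s ◁ (t ▷ u))^R = t ◁ u`. Factorizing `s t u` in two ways shows that the `M`-part of
`(s ◁ (t ▷ u)) (t ◁ u)` is the `M`-part of `s t`, namely `e`; uniqueness of right inverses concludes.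
-/

section CosetFactorization

variable {X M : Type*} [Group X] {G : Subgroup X} {emb : M → X}

theorem factor_unique (hfactor : ∀ x : X, ∃! p : G × M, x = (p.1 : X) * emb p.2)
    {g₁ g₂ : G} {m₁ m₂ : M} (h : (g₁ : X) * emb m₁ = g₂ * emb m₂) : g₁ = g₂ ∧ m₁ = m₂ :=
  Prod.mk.inj ((hfactor _).unique rfl h)

theorem trl_mul (hfactor : ∀ x : X, ∃! p : G × M, x = (p.1 : X) * emb p.2)
    {trl : M → G → G} {trr : M → G → M}
    (htr : ∀ (s : M) (u : G), emb s * (u : X) = (trl s u : X) * emb (trr s u))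
    (t : M) (u w : G) :
    trl t (u * w) = trl t u * trl (trr t u) w := by
  have h : (trl t (u * w) : X) * emb (trr t (u * w)) =
      ((trl t u * trl (trr t u) w : G) : X) * emb (trr (trr t u) w) :=
    calc (trl t (u * w) : X) * emb (trr t (u * w))
        = emb t * (u : X) * (w : X) := by rw [← htr, Subgroup.coe_mul, mul_assoc]
      _ = (trl t u : X) * (emb (trr t u) * (w : X)) := by rw [htr, mul_assoc]
      _ = ((trl t u * trl (trr t u) w : G) : X) * emb (trr (trr t u) w) := by
          rw [htr, Subgroup.coe_mul, mul_assoc]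
  exact (factor_unique hfactor h).1

theorem rinv_trr_trl_rinv (hfactor : ∀ x : X, ∃! p : G × M, x = (p.1 : X) * emb p.2)
    {trl : M → G → G} {trr : M → G → M}
    (htr : ∀ (s : M) (u : G), emb s * (u : X) = (trl s u : X) * emb (trr s u))
    {tau : M → M → G} {dot : M → M → M}
    (htau : ∀ s t : M, emb s * emb t = (tau s t : X) * emb (dot s t))
    {eM : M} (heM : emb eM = 1) {Rinv : M → M} (hR : ∀ t : M, dot t (Rinv t) = eM)
    (hRuniq : ∀ t t' : M, dot t t' = eM → t' = Rinv t) (s : M) (u : G) :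
    Rinv (trr s (trl (Rinv s) u)) = trr (Rinv s) u := by
  set t := Rinv s
  set a := trl t u
  refine (hRuniq _ _ ?_).symm
  have h : ((tau s t * u : G) : X) * emb eM =
      ((trl s a * tau (trr s a) (trr t u) : G) : X) * emb (dot (trr s a) (trr t u)) :=
    calc ((tau s t * u : G) : X) * emb eM
        = (tau s t : X) * emb (dot s t) * (u : X) := by rw [hR, heM]; simp
      _ = emb s * (emb t * (u : X)) := by rw [← htau, mul_assoc]
      _ = emb s * (a : X) * emb (trr t u) := by rw [htr, mul_assoc]
      _ = ((trl s a * tau (trr s a) (trr t u) : G) : X) * emb (dot (trr s a) (trr t u)) := by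
          rw [htr, mul_assoc, htau, Subgroup.coe_mul, mul_assoc]
  exact (factor_unique hfactor h).2.symm

end CosetFactorization

theorem coset_conjugate_right_action_general
    (X : Type*) [Group X] (G : Subgroup X)
    (M : Type*) (emb : M → X)
    (hfactor : ∀ x : X, ∃! p : G × M, x = (p.1 : X) * emb p.2)
    (trl : M → G → G) (trr : M → G → M)
    (htr : ∀ (s : M) (u : G), emb s * (u : X) = (trl s u : X) * emb (trr s u))
    (tau : M → M → G) (dot : M → M → M)
    (htau : ∀ s t : M, emb s * emb t = (tau s t : X) * emb (dot s t))
    (eM : M) (heM : emb eM = 1)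
    (Rinv : M → M) (hR : ∀ t : M, dot t (Rinv t) = eM)
    (hRuniq : ∀ t t' : M, dot t t' = eM → t' = Rinv t)
    (V : Type*) [AddCommGroup V] [Module ℂ V]
    (comp : M → Submodule ℂ V)
    (act : V → G → V)
    (hactmul : ∀ (v : V) (u w : G), act (act v u) w = act v (u * w)) :
    ∀ (s : M) (v : V), v ∈ comp s → ∀ u w : G,
      act (act v (trl (Rinv s) u)) (trl (Rinv (trr s (trl (Rinv s) u))) w) =
        act v (trl (Rinv s) (u * w)) := by
  intro s v _ u w
  rw [hactmul, rinv_trr_trl_rinv hfactor htr htau heM hR hRuniq, trl_mul hfactor htr]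

/-- Coset representative category: `G ≤ X` finite groups, `M ∋ e` a transversal of the cosets
(every `x ∈ X` factorizes uniquely as `x = u s` with `u ∈ G`, `s ∈ M`), with the matched
operations `s ▷ u ∈ G`, `s ◁ u ∈ M` (`s u = (s ▷ u)(s ◁ u)`) and `τ(s,t) ∈ G`,
`s · t ∈ M` (`s t = τ(s,t)(s·t)`), and unique right inverses `t^R` (`t · t^R = e`).
For an `M`-graded right `G`-representation `V` (`⟨ξ ◁̄ u⟩ = ⟨ξ⟩ ◁ u`), the conjugate `V̄`
with `⟨v̄⟩ = ⟨v⟩^R` and `v̄ ◁̄ u = (v ◁̄ (⟨v⟩^R ▷ u))‾` carries a right `G`-action: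
`(v̄ ◁̄ u) ◁̄ w = v̄ ◁̄ (u w)`. -/
theorem coset_conjugate_right_action
    (X : Type*) [Group X] [Fintype X] (G : Subgroup X)
    (M : Type*) (emb : M → X)
    (hfactor : ∀ x : X, ∃! p : G × M, x = (p.1 : X) * emb p.2)
    (trl : M → G → G) (trr : M → G → M)
    (htr : ∀ (s : M) (u : G), emb s * (u : X) = (trl s u : X) * emb (trr s u))
    (tau : M → M → G) (dot : M → M → M)
    (htau : ∀ s t : M, emb s * emb t = (tau s t : X) * emb (dot s t))
    (eM : M) (heM : emb eM = 1)
    (Rinv : M → M) (hR : ∀ t : M, dot t (Rinv t) = eM)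
    (hRuniq : ∀ t t' : M, dot t t' = eM → t' = Rinv t)
    (V : Type*) [AddCommGroup V] [Module ℂ V]
    (comp : M → Submodule ℂ V)
    (act : V → G → V)
    (hact1 : ∀ v : V, act v 1 = v)
    (hactmul : ∀ (v : V) (u w : G), act (act v u) w = act v (u * w))
    (hactlin : ∀ u : G, IsLinearMap ℂ (act · u))
    (hcompat : ∀ (s : M) (v : V), v ∈ comp s → ∀ u : G, act v u ∈ comp (trr s u)) :
    ∀ (s : M) (v : V), v ∈ comp s → ∀ u w : G,
      act (act v (trl (Rinv s) u)) (trl (Rinv (trr s (trl (Rinv s) u))) w) =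
        act v (trl (Rinv s) (u * w)) :=
  coset_conjugate_right_action_general X G M emb hfactor trl trr htr tau dot htau eM heM Rinv hR
    hRuniq V comp act hactmul
end

section
/- In a star bar category, define Γ_{Y,X}: X⊗Y → Y⊗X by Υ⁻¹ ∘ (⋆⊗⋆) ∘ Γ_{Y,X} = ⋆_{X⊗Y}. Then the coboundary Ξ satisfies Ξ_{X,Y} = Γ_{X,Y} ∘ Γ_{Y,X} (i.e. Ξ = Γ²). -/
open CategoryTheory MonoidalCategory

universe v u

variable {C : Type u} [Category.{v} C] [MonoidalCategory C]

namespace BarCategoryStruct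

/-- Write `bb = ⋆̄ ∘ ⋆`, bar the factorisation `Υ ∘ ⋆ = (⋆ ⊗ ⋆) ∘ Γ`, move `⋆` and `Υ` past
`Γ` by naturality and factor once more at `(Y, X)`; the remaining `⋆̄ ∘ ⋆` cancel the `bb⁻¹`. -/
theorem Xi_eq_comp_of_star_comp_Upsilon (B : BarCategoryStruct C) (st : 𝟭 C ⟶ B.bar)
    (hstar : ∀ X : C, st.app X ≫ B.bar.map (st.app X) = B.bb.hom.app X)
    (Γ : ∀ X Y : C, X ⊗ Y ⟶ Y ⊗ X)
    (hΓ : ∀ X Y : C, st.app (X ⊗ Y) ≫ (B.Upsilon X Y).hom = Γ X Y ≫ (st.app Y ⊗ₘ st.app X))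
    (X Y : C) : B.Xi X Y = Γ X Y ≫ Γ Y X := by
  have hnat : st.app (X ⊗ Y) ≫ B.bar.map (Γ X Y) = Γ X Y ≫ st.app (Y ⊗ X) :=
    (st.naturality (Γ X Y)).symm
  calc B.Xi X Y
      = st.app (X ⊗ Y) ≫ B.bar.map (st.app (X ⊗ Y) ≫ (B.Upsilon X Y).hom) ≫
          (B.Upsilon (B.bar.obj Y) (B.bar.obj X)).hom ≫
          (B.bb.inv.app X ⊗ₘ B.bb.inv.app Y) := by
        simp only [Xi, ← hstar (X ⊗ Y), Functor.map_comp, Category.assoc]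
    _ = Γ X Y ≫ st.app (Y ⊗ X) ≫ (B.Upsilon Y X).hom ≫
          (B.bar.map (st.app X) ⊗ₘ B.bar.map (st.app Y)) ≫
          (B.bb.inv.app X ⊗ₘ B.bb.inv.app Y) := by
        rw [hΓ, Functor.map_comp_assoc, reassoc_of% hnat,
          reassoc_of% (B.upsilon_natural (st.app Y) (st.app X))]
    _ = Γ X Y ≫ Γ Y X := by
        rw [reassoc_of% (hΓ Y X), tensorHom_comp_tensorHom_assoc, tensorHom_comp_tensorHom,
          hstar, hstar, Iso.hom_inv_id_app, Iso.hom_inv_id_app]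
        simp

end BarCategoryStruct

/-- `Γ X Y : X ⊗ Y ⟶ Y ⊗ X` is the paper's `Γ_{Y,X}`. -/
theorem star_bar_category_Xi_eq_Gamma_sq (B : BarCategoryStruct C)
    (st : 𝟭 C ⟶ B.bar) [∀ X : C, IsIso (st.app X)]
    (hstarobj : ∀ X : C, st.app X ≫ B.bar.map (st.app X) = B.bb.hom.app X)
    (hassoc : ∀ X Y Z : C,
      (α_ X Y Z).hom ≫ st.app (X ⊗ (Y ⊗ Z)) =
        st.app ((X ⊗ Y) ⊗ Z) ≫ B.bar.map (α_ X Y Z).hom)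
    (Γ : ∀ X Y : C, X ⊗ Y ⟶ Y ⊗ X)
    (hΓiso : ∀ X Y : C, IsIso (Γ X Y))
    (hΓnat : ∀ {X Y X' Y' : C} (f : X ⟶ X') (g : Y ⟶ Y'),
      (f ⊗ₘ g) ≫ Γ X' Y' = Γ X Y ≫ (g ⊗ₘ f))
    (hΓdef : ∀ X Y : C,
      Γ X Y ≫ (st.app Y ⊗ₘ st.app X) ≫ (B.Upsilon X Y).inv = st.app (X ⊗ Y)) :
    ∀ X Y : C, B.Xi X Y = Γ X Y ≫ Γ Y X :=
  B.Xi_eq_comp_of_star_comp_Upsilon st hstarobj Γ fun X Y =>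
    ((Iso.comp_inv_eq _).mp (by rw [Category.assoc, hΓdef])).symm
end

section
/- Let C be a left rigid bar category. Then C is right rigid: for each object X, the object X° := ((X̄)')‾ together with ev^R := ⋆⁻¹ ∘ (ev^L_{X̄})‾ ∘ Υ⁻¹ ∘ (bb⊗id) : X⊗X° → 1 and coev^R := (id⊗bb⁻¹) ∘ Υ ∘ (coev^L_{X̄})‾ ∘ ⋆ : 1 → X°⊗X satisfies the right-duality triangle identities, e.g. ev^R ∘ Φ⁻¹ ∘ (id⊗coev^R) = id_X (with unit isomorphisms inserted). -/
open CategoryTheory MonoidalCategory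

universe v u

variable {C : Type u} [Category.{v} C] [MonoidalCategory C]

/-!
Applying the bar functor to the zig-zag identities of the left dual `(X̄)'` of `X̄`, and using
axioms a) and b) to pull the bar through units, tensor products and associators, gives the
zig-zag identities of an exact pairing between `((X̄)')‾` and `X̄̄`: the bar functor reverses
tensor products, so it turns left duals into right duals. Transporting this pairing along
`bb : X ≅ X̄̄` yields the right dual of `X`.

In Mathlib's `ExactPairing X Y` (coevaluation `𝟙_ ⟶ X ⊗ Y`, evaluation `Y ⊗ X ⟶ 𝟙_`) the
object `Y` is what the paper calls a left dual of `X`.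
-/

lemma tensorHom_evaluation_coevaluation_iff {X Y : C} (coev : 𝟙_ C ⟶ X ⊗ Y) (ev : Y ⊗ X ⟶ 𝟙_ C) :
    (λ_ X).inv ≫ (coev ⊗ₘ 𝟙 X) ≫ (α_ X Y X).hom ≫ (𝟙 X ⊗ₘ ev) ≫ (ρ_ X).hom = 𝟙 X ↔
      coev ▷ X ≫ (α_ X Y X).hom ≫ X ◁ ev = (λ_ X).hom ≫ (ρ_ X).inv := by
  simp only [tensorHom_id, id_tensorHom, Iso.inv_comp_eq, Category.comp_id]
  simp only [← Category.assoc, ← Iso.eq_comp_inv]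

lemma tensorHom_coevaluation_evaluation_iff {X Y : C} (coev : 𝟙_ C ⟶ X ⊗ Y) (ev : Y ⊗ X ⟶ 𝟙_ C) :
    (ρ_ Y).inv ≫ (𝟙 Y ⊗ₘ coev) ≫ (α_ Y X Y).inv ≫ (ev ⊗ₘ 𝟙 Y) ≫ (λ_ Y).hom = 𝟙 Y ↔
      Y ◁ coev ≫ (α_ Y X Y).inv ≫ ev ▷ Y = (ρ_ Y).hom ≫ (λ_ Y).inv := by
  simp only [tensorHom_id, id_tensorHom, Iso.inv_comp_eq, Category.comp_id]
  simp only [← Category.assoc, ← Iso.eq_comp_inv]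

namespace BarCategoryStruct

variable (B : BarCategoryStruct C)

lemma map_whiskerRight {X Y : C} (f : X ⟶ Y) (Z : C) :
    B.bar.map (f ▷ Z) =
      (B.Upsilon X Z).hom ≫ B.bar.obj Z ◁ B.bar.map f ≫ (B.Upsilon Y Z).inv := by
  have h := B.upsilon_natural f (𝟙 Z)
  rw [CategoryTheory.Functor.map_id, tensorHom_id, id_tensorHom] at h
  rw [← reassoc_of% h, Iso.hom_inv_id, Category.comp_id]

lemma map_whiskerLeft (X : C) {Y Z : C} (f : Y ⟶ Z) :
    B.bar.map (X ◁ f) =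
      (B.Upsilon X Y).hom ≫ B.bar.map f ▷ B.bar.obj X ≫ (B.Upsilon X Z).inv := by
  have h := B.upsilon_natural (𝟙 X) f
  rw [CategoryTheory.Functor.map_id, tensorHom_id, id_tensorHom] at h
  rw [← reassoc_of% h, Iso.hom_inv_id, Category.comp_id]

lemma map_leftUnitor_inv (X : C) :
    B.bar.map (λ_ X).inv =
      (ρ_ (B.bar.obj X)).inv ≫ B.bar.obj X ◁ B.star.hom ≫ (B.Upsilon (𝟙_ C) X).inv := by
  rw [← B.axiom_a2 X]
  simp

lemma map_rightUnitor_inv (X : C) :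
    B.bar.map (ρ_ X).inv =
      (λ_ (B.bar.obj X)).inv ≫ B.star.hom ▷ B.bar.obj X ≫ (B.Upsilon X (𝟙_ C)).inv := by
  rw [← B.axiom_a1 X]
  simp

lemma map_leftUnitor_hom (X : C) :
    B.bar.map (λ_ X).hom =
      (B.Upsilon (𝟙_ C) X).hom ≫ B.bar.obj X ◁ B.star.inv ≫ (ρ_ (B.bar.obj X)).hom := by
  rw [← cancel_epi (B.bar.map (λ_ X).inv), ← B.bar.map_comp, B.map_leftUnitor_inv]
  simp

lemma map_rightUnitor_hom (X : C) :
    B.bar.map (ρ_ X).hom =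
      (B.Upsilon X (𝟙_ C)).hom ≫ B.star.inv ▷ B.bar.obj X ≫ (λ_ (B.bar.obj X)).hom := by
  rw [← cancel_epi (B.bar.map (ρ_ X).inv), ← B.bar.map_comp, B.map_rightUnitor_inv]
  simp

lemma map_associator_hom (X Y Z : C) :
    B.bar.map (α_ X Y Z).hom =
      (B.Upsilon (X ⊗ Y) Z).hom ≫ B.bar.obj Z ◁ (B.Upsilon X Y).hom ≫
        (α_ (B.bar.obj Z) (B.bar.obj Y) (B.bar.obj X)).inv ≫
        (B.Upsilon Y Z).inv ▷ B.bar.obj X ≫ (B.Upsilon X (Y ⊗ Z)).inv := by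
  have h := B.axiom_b X Y Z
  rw [tensorHom_id, id_tensorHom] at h
  rw [← reassoc_of% h]
  simp

lemma map_associator_inv (X Y Z : C) :
    B.bar.map (α_ X Y Z).inv =
      (B.Upsilon X (Y ⊗ Z)).hom ≫ (B.Upsilon Y Z).hom ▷ B.bar.obj X ≫
        (α_ (B.bar.obj Z) (B.bar.obj Y) (B.bar.obj X)).hom ≫
        B.bar.obj Z ◁ (B.Upsilon X Y).inv ≫ (B.Upsilon (X ⊗ Y) Z).inv := by
  rw [← cancel_epi (B.bar.map (α_ X Y Z).hom), ← B.bar.map_comp, B.map_associator_hom]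
  simp

@[reducible]
def exactPairingBar (Y E : C) [ExactPairing Y E] :
    ExactPairing (B.bar.obj E) (B.bar.obj Y) where
  coevaluation' := B.star.hom ≫ B.bar.map (η_ Y E) ≫ (B.Upsilon Y E).hom
  evaluation' := (B.Upsilon E Y).inv ≫ B.bar.map (ε_ Y E) ≫ B.star.inv
  coevaluation_evaluation' := by
    have h := congrArg B.bar.map (ExactPairing.evaluation_coevaluation Y E)
    simp only [Functor.map_comp, map_whiskerRight, map_whiskerLeft, map_associator_hom,
      map_leftUnitor_hom, map_rightUnitor_inv, Category.assoc, Iso.inv_hom_id_assoc] at h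
    -- `h` is the goal conjugated by `Υ`, up to whiskering by `⋆`
    simp only [← Category.assoc, Iso.cancel_iso_inv_right] at h
    simp only [MonoidalCategory.whiskerLeft_comp, comp_whiskerRight, Category.assoc,
      Iso.cancel_iso_hom_left] at h ⊢
    rw [reassoc_of% h]
    simp
  evaluation_coevaluation' := by
    have h := congrArg B.bar.map (ExactPairing.coevaluation_evaluation Y E)
    simp only [Functor.map_comp, map_whiskerRight, map_whiskerLeft, map_associator_inv,
      map_rightUnitor_hom, map_leftUnitor_inv, Category.assoc, Iso.inv_hom_id_assoc] at h
    simp only [← Category.assoc, Iso.cancel_iso_inv_right] at h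
    simp only [MonoidalCategory.whiskerLeft_comp, comp_whiskerRight, Category.assoc,
      Iso.cancel_iso_hom_left] at h ⊢
    rw [reassoc_of% h]
    simp

end BarCategoryStruct

/-- In a left rigid bar category, each object has a right dual: given left duals `D X` with
evaluation `ev : D X ⊗ X ⟶ 𝟙_` and coevaluation `coev : 𝟙_ ⟶ X ⊗ D X` satisfying the
triangle identities, the object `X° := ((X̄)')‾` together with
`ev^R = ⋆⁻¹ ∘ (ev^L_{X̄})‾ ∘ Υ⁻¹ ∘ (bb ⊗ id)` and
`coev^R = (id ⊗ bb⁻¹) ∘ Υ ∘ (coev^L_{X̄})‾ ∘ ⋆` satisfies the right-duality triangle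
identities. -/
theorem right_rigid_of_left_rigid_bar (B : BarCategoryStruct C)
    (D : C → C) (ev : ∀ X : C, D X ⊗ X ⟶ 𝟙_ C) (coev : ∀ X : C, 𝟙_ C ⟶ X ⊗ D X)
    (htri1 : ∀ X : C,
      (λ_ X).inv ≫ (coev X ⊗ₘ 𝟙 X) ≫ (α_ X (D X) X).hom ≫ (𝟙 X ⊗ₘ ev X) ≫ (ρ_ X).hom =
        𝟙 X)
    (htri2 : ∀ X : C,
      (ρ_ (D X)).inv ≫ (𝟙 (D X) ⊗ₘ coev X) ≫ (α_ (D X) X (D X)).inv ≫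
          (ev X ⊗ₘ 𝟙 (D X)) ≫ (λ_ (D X)).hom = 𝟙 (D X)) :
    ∀ X : C,
      let Xo : C := B.bar.obj (D (B.bar.obj X))
      let evR : X ⊗ Xo ⟶ 𝟙_ C :=
        (B.bb.hom.app X ⊗ₘ 𝟙 Xo) ≫ (B.Upsilon (D (B.bar.obj X)) (B.bar.obj X)).inv ≫
          B.bar.map (ev (B.bar.obj X)) ≫ B.star.inv
      let coevR : 𝟙_ C ⟶ Xo ⊗ X :=
        B.star.hom ≫ B.bar.map (coev (B.bar.obj X)) ≫
          (B.Upsilon (B.bar.obj X) (D (B.bar.obj X))).hom ≫ (𝟙 Xo ⊗ₘ B.bb.inv.app X)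
      ((ρ_ X).inv ≫ (𝟙 X ⊗ₘ coevR) ≫ (α_ X Xo X).inv ≫ (evR ⊗ₘ 𝟙 X) ≫ (λ_ X).hom =
        𝟙 X) ∧
      ((λ_ Xo).inv ≫ (coevR ⊗ₘ 𝟙 Xo) ≫ (α_ Xo X Xo).hom ≫ (𝟙 Xo ⊗ₘ evR) ≫ (ρ_ Xo).hom =
        𝟙 Xo) := by
  intro X Xo evR coevR
  let Y := B.bar.obj X
  let _ : ExactPairing Y (D Y) :=
    ⟨coev Y, ev Y, (tensorHom_coevaluation_evaluation_iff _ _).mp (htri2 Y),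
      (tensorHom_evaluation_coevaluation_iff _ _).mp (htri1 Y)⟩
  let _ := B.exactPairingBar Y (D Y)
  let _ : ExactPairing Xo X := exactPairingCongrRight (Y' := B.bar.obj Y) (B.bb.app X)
  have hη : η_ Xo X = coevR := by
    change (B.star.hom ≫ B.bar.map (coev Y) ≫ (B.Upsilon Y (D Y)).hom) ≫
      Xo ◁ B.bb.inv.app X = coevR
    simp only [coevR, Category.assoc]
    rw [id_tensorHom]
  have hε : ε_ Xo X = evR := by
    simp only [evR, tensorHom_id]
    rfl
  rw [tensorHom_coevaluation_evaluation_iff, tensorHom_evaluation_coevaluation_iff, ← hη, ← hε]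
  exact ⟨ExactPairing.coevaluation_evaluation Xo X, ExactPairing.evaluation_coevaluation Xo X⟩
end
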